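/- arXiv:1806.03774 — 4 statements merged into one kernel-verified Lean document; each statement's English description precedes it below -/
import Mathlib

section
/- Let p be a prime and let a_1, a_2, a_3 be integers with 1 ≤ a_1 ≤ a_2 ≤ a_3. If b is an integer with a_2 < b ≤ a_1 + a_2 ≤ a_3, then the number h_b of subgroups of order p^b in ℤ/p^{a_1} × ℤ/p^{a_2} × ℤ/p^{a_3} satisfies h_b · (p-1)(p^2-1) = (b-a_2+1)·p^{a_1+a_2+3} + p^{a_1+a_2+2} - (b-a_2)·p^{a_1+a_2+1} - p^{2a_1+2} - p^{b+2} - p^{b+1} + 1. -/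
/-!
A subgroup `H ≤ A × C` is the same as a triple `(P, T, φ)`: its projection `P ≤ A`, its
intersection `T` with `C`, and the homomorphism `φ : P → C ⧸ T` whose graph it is; moreover
`|H| = |P| |T|`. When `C` is cyclic, `T` is determined by its order and `C ⧸ T` is cyclic, so
everything reduces to counting homomorphisms into cyclic groups.

For `C = ℤ/p^{a₃}` and `b ≤ a₃`, a subgroup `P` with `|P| ∣ p^b` admits exactly `|P|`
homomorphisms into the cyclic group `C ⧸ T` of order `p^{a₃ - b} |P|`, hence
`h_b = ∑_{s ≤ b} p^s h'_s`, where `h'_s` counts subgroups of order `p^s` of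
`ℤ/p^{a₁} × ℤ/p^{a₂}`. The same decomposition of this rank-two group gives
`h'_s = 1 + p + ⋯ + p^{min(s, a₁) - max(0, s - a₂)}`, and the sum over `s` splits into the
ranges `s < a₁`, `a₁ ≤ s ≤ a₂` and `a₂ < s ≤ b`, on each of which it telescopes.
-/

open Finset

namespace AddSubgroup

variable {A C : Type*} [AddCommGroup A] [AddCommGroup C]

def glue (P : AddSubgroup A) (T : AddSubgroup C) (φ : P →+ C ⧸ T) : AddSubgroup (A × C) where
  carrier := {x | ∃ h : x.1 ∈ P, (x.2 : C ⧸ T) = φ ⟨x.1, h⟩}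
  zero_mem' := ⟨zero_mem P, (map_zero φ).symm⟩
  add_mem' := by
    rintro ⟨a, c⟩ ⟨a', c'⟩ ⟨ha, hc⟩ ⟨ha', hc'⟩
    exact ⟨add_mem ha ha',
      (congrArg₂ (· + ·) hc hc').trans (map_add φ ⟨a, ha⟩ ⟨a', ha'⟩).symm⟩
  neg_mem' := by
    rintro ⟨a, c⟩ ⟨ha, hc⟩
    exact ⟨neg_mem ha, (congrArg Neg.neg hc).trans (map_neg φ ⟨a, ha⟩).symm⟩

section glue

variable {P : AddSubgroup A} {T : AddSubgroup C} {φ : P →+ C ⧸ T}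

lemma mem_glue_of_mem {a : A} (ha : a ∈ P) {c : C} :
    (a, c) ∈ glue P T φ ↔ (c : C ⧸ T) = φ ⟨a, ha⟩ :=
  ⟨fun ⟨_, h⟩ => h, fun h => ⟨ha, h⟩⟩

lemma mk_out_mem_glue (a : P) : ((a : A), (φ a).out) ∈ glue P T φ :=
  ⟨a.2, QuotientAddGroup.out_eq' _⟩

lemma exists_mk_mem_glue_iff {a : A} : (∃ c, (a, c) ∈ glue P T φ) ↔ a ∈ P :=
  ⟨fun ⟨_, h⟩ => h.1, fun ha => ⟨_, mk_out_mem_glue ⟨a, ha⟩⟩⟩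

lemma zero_mk_mem_glue_iff {c : C} : ((0 : A), c) ∈ glue P T φ ↔ c ∈ T := by
  rw [mem_glue_of_mem (zero_mem P)]
  exact (map_zero φ).symm ▸ QuotientAddGroup.eq_zero_iff c

end glue

noncomputable def glueEquivProd (P : AddSubgroup A) (T : AddSubgroup C) (φ : P →+ C ⧸ T) :
    glue P T φ ≃ P × T where
  toFun x := ⟨⟨x.1.1, x.2.1⟩, ⟨x.1.2 - (φ ⟨x.1.1, x.2.1⟩).out, by
    rw [← QuotientAddGroup.eq_zero_iff, QuotientAddGroup.mk_sub, QuotientAddGroup.out_eq',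
      ← x.2.2, sub_self]⟩⟩
  invFun y := ⟨(y.1, y.2 + (φ y.1).out), y.1.2, by
    simp [(QuotientAddGroup.eq_zero_iff _).2 y.2.2]⟩
  left_inv x := by ext <;> simp
  right_inv y := by ext <;> simp

lemma card_glue (P : AddSubgroup A) (T : AddSubgroup C) (φ : P →+ C ⧸ T) :
    Nat.card (glue P T φ) = Nat.card P * Nat.card T := by
  rw [Nat.card_congr (glueEquivProd P T φ), Nat.card_prod]

lemma glue_injective :
    Function.Injective fun x : Σ (P : AddSubgroup A) (T : AddSubgroup C), P →+ C ⧸ T =>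
      glue x.1 x.2.1 x.2.2 := by
  rintro ⟨P, T, φ⟩ ⟨P', T', φ'⟩ (h : glue P T φ = glue P' T' φ')
  obtain rfl : P = P' := by
    ext a
    rw [← exists_mk_mem_glue_iff (φ := φ), ← exists_mk_mem_glue_iff (φ := φ'), h]
  obtain rfl : T = T' := by
    ext c
    rw [← zero_mk_mem_glue_iff (φ := φ), ← zero_mk_mem_glue_iff (φ := φ'), h]
  obtain rfl : φ = φ' := by
    ext a
    have hmem := mk_out_mem_glue (φ := φ) a
    rwa [h, mem_glue_of_mem a.2, QuotientAddGroup.out_eq'] at hmem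
  rfl

lemma glue_surjective (H : AddSubgroup (A × C)) :
    ∃ (P : AddSubgroup A) (T : AddSubgroup C) (φ : P →+ C ⧸ T), glue P T φ = H := by
  let P := H.map (AddMonoidHom.fst A C)
  let T := H.comap (AddMonoidHom.inr A C)
  have lift (a : P) : ∃ c, ((a : A), c) ∈ H := by
    obtain ⟨x, hx, hxa⟩ := a.2
    exact ⟨x.2, hxa ▸ hx⟩
  choose s hs using lift
  have mk_eq {a : A} {c c' : C} (h : (a, c) ∈ H) (h' : (a, c') ∈ H) : (c : C ⧸ T) = c' := by
    rw [QuotientAddGroup.eq]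
    simpa [T] using H.add_mem (H.neg_mem h) h'
  let φ : P →+ C ⧸ T := AddMonoidHom.mk' (fun a => (s a : C ⧸ T)) fun a a' => by
    rw [← QuotientAddGroup.mk_add]
    exact mk_eq (hs _) (by simpa using H.add_mem (hs a) (hs a'))
  refine ⟨P, T, φ, ?_⟩
  ext ⟨a, c⟩
  constructor
  · rintro ⟨ha, hc⟩
    have hT : ((0 : A), -s ⟨a, ha⟩ + c) ∈ H := by
      simpa [T] using QuotientAddGroup.eq.1 hc.symm
    simpa using H.add_mem (hs ⟨a, ha⟩) hT
  · intro h
    have ha : a ∈ P := ⟨(a, c), h, rfl⟩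
    exact ⟨ha, mk_eq h (hs ⟨a, ha⟩)⟩

noncomputable def glueEquiv :
    (Σ (P : AddSubgroup A) (T : AddSubgroup C), P →+ C ⧸ T) ≃ AddSubgroup (A × C) :=
  Equiv.ofBijective _ ⟨glue_injective, fun H => by
    obtain ⟨P, T, φ, h⟩ := glue_surjective H
    exact ⟨⟨P, T, φ⟩, h⟩⟩

lemma glueEquiv_apply (x : Σ (P : AddSubgroup A) (T : AddSubgroup C), P →+ C ⧸ T) :
    glueEquiv x = glue x.1 x.2.1 x.2.2 :=
  rfl

end AddSubgroup

instance AddMonoidHom.finite {M N : Type*} [AddZeroClass M] [AddZeroClass N] [Finite M]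
    [Finite N] : Finite (M →+ N) :=
  Finite.of_injective _ DFunLike.coe_injective

noncomputable instance AddSubgroup.fintypeOfFinite {G : Type*} [AddGroup G] [Finite G] :
    Fintype (AddSubgroup G) :=
  Fintype.ofFinite _

namespace AddSubgroup

noncomputable def numOfCard (G : Type*) [AddGroup G] (n : ℕ) : ℕ :=
  Nat.card {H : AddSubgroup G // Nat.card H = n}

lemma _root_.AddEquiv.numOfCard_eq {G G' : Type*} [AddGroup G] [AddGroup G'] (e : G ≃+ G')
    (n : ℕ) : numOfCard G n = numOfCard G' n :=
  Nat.card_congr (e.mapAddSubgroup.toEquiv.subtypeEquiv fun H => by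
    rw [← card_mapAddSubgroup H e]; rfl)

lemma sum_card_eq_sum_divisors {G M : Type*} [AddGroup G] [Finite G] [AddCommMonoid M]
    (f : ℕ → M) :
    ∑ H : AddSubgroup G, f (Nat.card H) =
      ∑ d ∈ (Nat.card G).divisors, numOfCard G d • f d := by
  classical
  rw [← sum_fiberwise_of_maps_to (g := fun H : AddSubgroup G => Nat.card H)
    (t := (Nat.card G).divisors)
    fun H _ => Nat.mem_divisors.2 ⟨card_addSubgroup_dvd_card H, Nat.card_pos.ne'⟩]
  refine sum_congr rfl fun d _ => ?_
  rw [sum_congr rfl fun H hH => by rw [(mem_filter.1 hH).2], sum_const, numOfCard,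
    Nat.card_eq_fintype_card, Fintype.card_subtype]

lemma card_quotient_eq_card_div_card {G : Type*} [AddGroup G] [Finite G] (H : AddSubgroup G) :
    Nat.card (G ⧸ H) = Nat.card G / Nat.card H := by
  rw [← H.card_mul_index, index_eq_card, Nat.mul_div_cancel_left _ Nat.card_pos]

variable {A C : Type*} [AddCommGroup A] [AddCommGroup C] [Finite A] [Finite C]

theorem numOfCard_prod (n : ℕ) :
    numOfCard (A × C) n = ∑ P : AddSubgroup A, ∑ T : AddSubgroup C,
      if Nat.card P * Nat.card T = n then Nat.card (P →+ C ⧸ T) else 0 := by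
  classical
  have (P : AddSubgroup A) (T : AddSubgroup C) : Fintype (P →+ C ⧸ T) := Fintype.ofFinite _
  rw [numOfCard, Nat.card_eq_fintype_card, Fintype.card_subtype, card_filter,
    ← glueEquiv.sum_comp, Fintype.sum_sigma]
  refine sum_congr rfl fun P _ => ?_
  rw [Fintype.sum_sigma]
  refine sum_congr rfl fun T _ => ?_
  simp only [glueEquiv_apply, card_glue]
  split_ifs <;> simp

end AddSubgroup

namespace IsAddCyclic

open AddSubgroup

instance quotient {C : Type*} [AddCommGroup C] [IsAddCyclic C] (T : AddSubgroup C) :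
    IsAddCyclic (C ⧸ T) :=
  isAddCyclic_of_surjective _ (QuotientAddGroup.mk'_surjective T)

variable {C : Type*} [AddCommGroup C] [IsAddCyclic C] [Finite C]

lemma addSubgroup_eq_ker_nsmul_card (T : AddSubgroup C) :
    T = (nsmulAddMonoidHom (Nat.card T) : C →+ C).ker := by
  refine eq_of_le_of_card_ge (fun x hx => ?_) ?_
  · exact congrArg Subtype.val (card_nsmul_eq_zero' (x := (⟨x, hx⟩ : T)))
  · rw [card_nsmulAddMonoidHom_ker, Nat.gcd_eq_right (card_addSubgroup_dvd_card T)]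

lemma numOfCard_eq_one {d : ℕ} (hd : d ∣ Nat.card C) : numOfCard C d = 1 := by
  rw [numOfCard, Nat.card_eq_one_iff_exists]
  refine ⟨⟨_, (card_nsmulAddMonoidHom_ker C d).trans (Nat.gcd_eq_right hd)⟩,
    fun ⟨T, hT⟩ => Subtype.ext (hT ▸ addSubgroup_eq_ker_nsmul_card T)⟩

lemma sum_addSubgroup_card_eq_sum_divisors {M : Type*} [AddCommMonoid M] (f : ℕ → M) :
    ∑ T : AddSubgroup C, f (Nat.card T) = ∑ d ∈ (Nat.card C).divisors, f d := by
  rw [sum_card_eq_sum_divisors]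
  refine sum_congr rfl fun d hd => ?_
  rw [numOfCard_eq_one (Nat.dvd_of_mem_divisors hd), one_smul]

lemma card_addMonoidHom_zmod (n : ℕ) : Nat.card (ZMod n →+ C) = (Nat.card C).gcd n := by
  rw [← card_nsmulAddMonoidHom_ker C n]
  refine (Nat.card_congr (((zmultiplesHom C).subtypeEquiv fun b => ?_).trans (ZMod.lift n))).symm
  simp [natCast_zsmul]

lemma card_addMonoidHom (P : Type*) [AddCommGroup P] [IsAddCyclic P] [Finite P] :
    Nat.card (P →+ C) = (Nat.card C).gcd (Nat.card P) := by
  rw [← card_addMonoidHom_zmod, Nat.card_congr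
    (zmodAddCyclicAddEquiv (inferInstance : IsAddCyclic P)).addMonoidHomCongrLeft.toEquiv]

lemma card_addMonoidHom_of_nsmul_card_eq_zero (G : Type*) [AddCommGroup G] [Finite G]
    (h : ∀ x : G, Nat.card C • x = 0) : Nat.card (G →+ C) = Nat.card G := by
  classical
  obtain ⟨ι, _, n, -, ⟨e⟩⟩ := AddCommGroup.equiv_directSum_zmod_of_finite' G
  let e' : G ≃+ ∀ i, ZMod (n i) := e.trans (DirectSum.addEquivProd _)
  have hdvd (i : ι) : n i ∣ Nat.card C := by
    refine (ZMod.natCast_eq_zero_iff _ _).1 ?_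
    simpa using congrFun (congrArg e' (h (e'.symm (Pi.single i 1)))) i
  rw [Nat.card_congr (e'.addMonoidHomCongrLeft.trans (Pi.addMonoidHomAddEquiv _ C)).toEquiv,
    Nat.card_pi, Nat.card_congr e'.toEquiv, Nat.card_pi]
  refine prod_congr rfl fun i _ => ?_
  rw [card_addMonoidHom_zmod, Nat.gcd_eq_right (hdvd i), Nat.card_zmod]

end IsAddCyclic

namespace AddSubgroup

variable {A C : Type*} [AddCommGroup A] [AddCommGroup C] [Finite A] [Finite C] [IsAddCyclic C]

theorem numOfCard_prod_of_isAddCyclic_of_dvd {n : ℕ} (hn : n ∣ Nat.card C) :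
    numOfCard (A × C) n = ∑ P : AddSubgroup A, if Nat.card P ∣ n then Nat.card P else 0 := by
  rw [numOfCard_prod]
  refine sum_congr rfl fun P _ => ?_
  have hom (T : AddSubgroup C) :
      (if Nat.card P * Nat.card T = n then Nat.card (P →+ C ⧸ T) else 0) =
        if Nat.card P * Nat.card T = n then Nat.card P else 0 := by
    split_ifs with hT
    · refine IsAddCyclic.card_addMonoidHom_of_nsmul_card_eq_zero _ fun x => ?_
      obtain ⟨k, hk⟩ : Nat.card P ∣ Nat.card (C ⧸ T) := by
        refine Nat.dvd_of_mul_dvd_mul_right (Nat.card_pos (α := T)) ?_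
        rw [← card_eq_card_quotient_mul_card_addSubgroup, hT]
        exact hn
      rw [hk, mul_nsmul', card_nsmul_eq_zero']
    · rfl
  rw [sum_congr rfl fun T _ => hom T,
    IsAddCyclic.sum_addSubgroup_card_eq_sum_divisors fun d =>
      if Nat.card P * d = n then Nat.card P else 0]
  split_ifs with hP
  · obtain ⟨d, rfl⟩ := hP
    rw [sum_eq_single_of_mem d (Nat.mem_divisors.2 ⟨dvd_of_mul_left_dvd hn, Nat.card_pos.ne'⟩)
      fun d' _ hd' => if_neg fun h => hd' (Nat.eq_of_mul_eq_mul_left Nat.card_pos h), if_pos rfl]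
  · exact sum_eq_zero fun d _ => if_neg fun h => hP ⟨d, h.symm⟩

theorem numOfCard_prod_of_isAddCyclic [IsAddCyclic A] (n : ℕ) :
    numOfCard (A × C) n = ∑ e ∈ (Nat.card A).divisors, ∑ d ∈ (Nat.card C).divisors,
      if e * d = n then (Nat.card C / d).gcd e else 0 := by
  rw [numOfCard_prod]
  simp_rw [IsAddCyclic.card_addMonoidHom, card_quotient_eq_card_div_card]
  rw [IsAddCyclic.sum_addSubgroup_card_eq_sum_divisors fun e => ∑ T : AddSubgroup C,
    if e * Nat.card T = n then (Nat.card C / Nat.card T).gcd e else 0]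
  exact sum_congr rfl fun e _ => IsAddCyclic.sum_addSubgroup_card_eq_sum_divisors
    fun d => if e * d = n then (Nat.card C / d).gcd e else 0

end AddSubgroup

lemma Nat.gcd_pow_pow (p a b : ℕ) : (p ^ a).gcd (p ^ b) = p ^ min a b := by
  rcases le_total a b with h | h
  · rw [Nat.gcd_eq_left (pow_dvd_pow p h), min_eq_left h]
  · rw [Nat.gcd_eq_right (pow_dvd_pow p h), min_eq_right h]

lemma sum_range_sum_range_ite_add_eq_sum_Ico {M : Type*} [AddCommMonoid M] (f : ℕ → M)
    (x y s : ℕ) :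
    ∑ u ∈ range (x + 1), ∑ d ∈ range (y + 1), (if u + d = s then f u else 0) =
      ∑ u ∈ Ico (s - y) (min s x + 1), f u := by
  have inner (u : ℕ) : ∑ d ∈ range (y + 1), (if u + d = s then f u else 0) =
      if s - y ≤ u ∧ u ≤ s then f u else 0 := by
    rw [sum_ite, sum_const_zero, add_zero, sum_const]
    split_ifs with h
    · rw [card_eq_one.2 ⟨s - u, ?_⟩, one_smul]
      ext d
      simp only [mem_filter, mem_range, mem_singleton]
      omega
    · rw [card_eq_zero.2 (filter_eq_empty_iff.2 fun d hd => ?_), zero_smul]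
      rw [mem_range] at hd
      omega
  rw [sum_congr rfl fun u _ => inner u, ← sum_filter]
  congr 1
  ext u
  simp only [mem_filter, mem_range, mem_Ico]
  omega

-- The truncated subtraction `s - y` vanishes for `s ≤ y`, and the range is empty for `s > x + y`.
theorem AddSubgroup.numOfCard_zmod_prod_zmod {p : ℕ} (hp : p.Prime) (x y s : ℕ) :
    numOfCard (ZMod (p ^ x) × ZMod (p ^ y)) (p ^ s) =
      ∑ j ∈ range (min s x + 1 - (s - y)), p ^ j := by
  have : NeZero (p ^ x) := ⟨pow_ne_zero _ hp.ne_zero⟩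
  have : NeZero (p ^ y) := ⟨pow_ne_zero _ hp.ne_zero⟩
  have term (u d : ℕ) (hd : d ∈ range (y + 1)) :
      (if p ^ u * p ^ d = p ^ s then (p ^ y / p ^ d).gcd (p ^ u) else 0) =
        if u + d = s then p ^ (u - (s - y)) else 0 := by
    rw [mem_range] at hd
    simp only [← pow_add, pow_right_inj₀ hp.pos hp.one_lt.ne']
    rw [Nat.pow_div (by omega) hp.pos, Nat.gcd_pow_pow]
    split_ifs with h
    · congr 1; omega
    · rfl
  rw [numOfCard_prod_of_isAddCyclic, Nat.card_zmod, Nat.card_zmod]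
  simp only [Nat.divisors_prime_pow hp, sum_map, Function.Embedding.coeFn_mk]
  rw [sum_congr rfl fun u _ => sum_congr rfl fun d hd => term u d hd,
    sum_range_sum_range_ite_add_eq_sum_Ico, sum_Ico_eq_sum_range]
  simp only [Nat.add_sub_cancel_left]

lemma sum_geom_sum_mul_pow_mul_eq (q : ℤ) {x y b : ℕ} (hxy : x ≤ y) (hyb : y < b)
    (hbxy : b ≤ x + y) :
    (∑ s ∈ range (b + 1), (∑ j ∈ range (min s x + 1 - (s - y)), q ^ j) * q ^ s) *
        ((q - 1) * (q ^ 2 - 1)) =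
      ((b : ℤ) - y + 1) * q ^ (x + y + 3) + q ^ (x + y + 2) - ((b : ℤ) - y) * q ^ (x + y + 1)
        - q ^ (2 * x + 2) - q ^ (b + 2) - q ^ (b + 1) + 1 := by
  obtain ⟨k, rfl⟩ : ∃ k, y = x + k := ⟨y - x, by omega⟩
  obtain ⟨m, rfl⟩ : ∃ m, b = x + (k + 1) + m := ⟨b - (x + k + 1), by omega⟩
  set T := fun s => (∑ j ∈ range (min s x + 1 - (s - (x + k))), q ^ j) * q ^ s *
    ((q - 1) * (q ^ 2 - 1))
  have low : ∑ s ∈ range x, T s = q ^ (2 * x + 1) - q ^ x * (q + 1) + 1 := by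
    let G := fun s : ℕ => q ^ (2 * s + 1) - q ^ s * (q + 1)
    refine (sum_congr rfl fun s hs => ?_).trans ((sum_range_sub G x).trans (by simp [G]))
    rw [mem_range] at hs
    simp only [T, G, show min s x + 1 - (s - (x + k)) = s + 1 by omega]
    linear_combination (q ^ s * (q ^ 2 - 1)) * geom_sum_mul q (s + 1)
  have mid : ∑ i ∈ range (k + 1), T (x + i) =
      (q ^ (x + 1) - 1) * (q + 1) * (q ^ (x + (k + 1)) - q ^ x) := by
    let G := fun i : ℕ => (q ^ (x + 1) - 1) * (q + 1) * q ^ (x + i)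
    refine (sum_congr rfl fun i hi => ?_).trans
      ((sum_range_sub G (k + 1)).trans (by simp only [G]; ring))
    rw [mem_range] at hi
    simp only [T, G, show min (x + i) x + 1 - (x + i - (x + k)) = x + 1 by omega]
    linear_combination (q ^ (x + i) * (q ^ 2 - 1)) * geom_sum_mul q (x + 1)
  have high : ∑ i ∈ range (m + 1), T (x + (k + 1) + i) =
      (m + 1) * q ^ (2 * x + k + 1) * (q ^ 2 - 1) -
        (q ^ (x + (k + 1) + (m + 1)) - q ^ (x + (k + 1))) * (q + 1) := by
    let G := fun i : ℕ =>
      (i : ℤ) * q ^ (2 * x + k + 1) * (q ^ 2 - 1) - q ^ (x + (k + 1) + i) * (q + 1)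
    refine (sum_congr rfl fun i hi => ?_).trans
      ((sum_range_sub G (m + 1)).trans (by simp only [G]; push_cast; ring))
    rw [mem_range] at hi
    simp only [T, G,
      show min (x + (k + 1) + i) x + 1 - (x + (k + 1) + i - (x + k)) = x - i by omega]
    have hpow : q ^ (x - i) * q ^ (x + (k + 1) + i) = q ^ (2 * x + k + 1) := by
      rw [← pow_add]; congr 1; omega
    push_cast
    linear_combination (q ^ (x + (k + 1) + i) * (q ^ 2 - 1)) * geom_sum_mul q (x - i)
      + (q ^ 2 - 1) * hpow
  rw [sum_mul, add_assoc, sum_range_add, sum_range_add]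
  simp only [T] at low mid high
  rw [low, mid, high]
  push_cast
  ring

theorem rank3_case4_general (p a₁ a₂ a₃ b : ℕ) (hp : p.Prime)
    (h12 : a₁ ≤ a₂)
    (hb1 : a₂ < b) (hb2 : b ≤ a₁ + a₂) (hb3 : a₁ + a₂ ≤ a₃) :
    (Nat.card {H : AddSubgroup (ZMod (p ^ a₁) × ZMod (p ^ a₂) × ZMod (p ^ a₃)) //
        Nat.card H = p ^ b} : ℤ) * (((p : ℤ) - 1) * ((p : ℤ) ^ 2 - 1)) =
      ((b : ℤ) - (a₂ : ℤ) + 1) * (p : ℤ) ^ (a₁ + a₂ + 3) + (p : ℤ) ^ (a₁ + a₂ + 2)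
        - ((b : ℤ) - (a₂ : ℤ)) * (p : ℤ) ^ (a₁ + a₂ + 1) - (p : ℤ) ^ (2 * a₁ + 2)
        - (p : ℤ) ^ (b + 2) - (p : ℤ) ^ (b + 1) + 1 := by
  have : NeZero (p ^ a₁) := ⟨pow_ne_zero _ hp.ne_zero⟩
  have : NeZero (p ^ a₂) := ⟨pow_ne_zero _ hp.ne_zero⟩
  have : NeZero (p ^ a₃) := ⟨pow_ne_zero _ hp.ne_zero⟩
  have hdvd : p ^ b ∣ Nat.card (ZMod (p ^ a₃)) := by
    rw [Nat.card_zmod]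
    exact pow_dvd_pow p (hb2.trans hb3)
  change (AddSubgroup.numOfCard _ (p ^ b) : ℤ) * _ = _
  rw [(AddEquiv.prodAssoc ..).symm.numOfCard_eq,
    AddSubgroup.numOfCard_prod_of_isAddCyclic_of_dvd hdvd,
    AddSubgroup.sum_card_eq_sum_divisors fun k => if k ∣ p ^ b then k else 0, Nat.card_prod,
    Nat.card_zmod, Nat.card_zmod, ← pow_add]
  simp only [Nat.divisors_prime_pow hp, sum_map, Function.Embedding.coeFn_mk,
    AddSubgroup.numOfCard_zmod_prod_zmod hp, Nat.pow_dvd_pow_iff_le_right hp.one_lt, smul_eq_mul,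
    mul_ite, mul_zero]
  have hrange : {s ∈ range (a₁ + a₂ + 1) | s ≤ b} = range (b + 1) := by
    ext s
    simp only [mem_filter, mem_range]
    omega
  rw [← sum_filter, hrange]
  push_cast
  exact sum_geom_sum_mul_pow_mul_eq (p : ℤ) h12 hb1 hb2

/-- Case 4 (`a₂ < b ≤ a₁ + a₂ ≤ a₃`) of the rank-3 subgroup counting theorem. -/
theorem rank3_case4 (p a₁ a₂ a₃ b : ℕ) (hp : p.Prime)
    (ha₁ : 1 ≤ a₁) (h12 : a₁ ≤ a₂) (h23 : a₂ ≤ a₃)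
    (hb1 : a₂ < b) (hb2 : b ≤ a₁ + a₂) (hb3 : a₁ + a₂ ≤ a₃) :
    (Nat.card {H : AddSubgroup (ZMod (p ^ a₁) × ZMod (p ^ a₂) × ZMod (p ^ a₃)) //
        Nat.card H = p ^ b} : ℤ) * (((p : ℤ) - 1) * ((p : ℤ) ^ 2 - 1)) =
      ((b : ℤ) - (a₂ : ℤ) + 1) * (p : ℤ) ^ (a₁ + a₂ + 3) + (p : ℤ) ^ (a₁ + a₂ + 2)
        - ((b : ℤ) - (a₂ : ℤ)) * (p : ℤ) ^ (a₁ + a₂ + 1) - (p : ℤ) ^ (2 * a₁ + 2)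
        - (p : ℤ) ^ (b + 2) - (p : ℤ) ^ (b + 1) + 1 :=
  rank3_case4_general p a₁ a₂ a₃ b hp h12 hb1 hb2 hb3
end

section
/- Let p be a prime and let a_1, a_2, a_3 be integers with 1 ≤ a_1 ≤ a_2 ≤ a_3. If b is an integer with a_1 + a_2 ≤ b ≤ a_3, then the number h_b of subgroups of order p^b in ℤ/p^{a_1} × ℤ/p^{a_2} × ℤ/p^{a_3} satisfies h_b · (p-1)(p^2-1) = (a_1+1)·p^{a_1+a_2+3} + p^{a_1+a_2+2} - a_1·p^{a_1+a_2+1} - p^{2a_1+2} - p^{a_1+a_2+2} - p^{a_1+a_2+1} + 1. -/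
/-!
By Goursat's lemma a subgroup of `A × B` is the same as a triple `(C ≤ B, K ≤ A, φ : C →+ A/K)`,
and it has order `|K| |C|`. For `A = ℤ/p^a₁ × ℤ/p^a₂` and the cyclic group `B = ℤ/p^a₃`, where
`|A| ∣ p^b ∣ |B|`, each `K` determines `C` as the unique subgroup of `B` of order `p^b / |K|`, and
since `|A/K|` divides `|C|` every element of `A/K` is the image of a generator of `C`. Hence
`h_b = ∑_{K ≤ A} [A : K]`. Goursat's lemma applied to `A` itself, whose two factors are cyclic,
turns this into an explicit double sum of powers of `p`, evaluated by induction on `a₂` starting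
from the diagonal `a₂ = a₁`.
-/

open Finset

instance {M N : Type*} [AddZeroClass M] [AddZeroClass N] [Finite M] [Finite N] :
    Finite (M →+ N) :=
  Finite.of_injective _ DFunLike.coe_injective

section Goursat

variable {A B : Type*} [AddCommGroup A] [AddCommGroup B]

lemma AddSubgroup.card_eq_card_comap_inl_mul_card_map_snd (H : AddSubgroup (A × B)) :
    Nat.card H =
      Nat.card (H.comap (AddMonoidHom.inl A B)) * Nat.card (H.map (AddMonoidHom.snd A B)) := by
  set f := (AddMonoidHom.snd A B).comp H.subtype
  have hker : f.ker ≃ H.comap (AddMonoidHom.inl A B) :=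
    { toFun x := ⟨x.1.1.1, by
        have hx : (x.1 : A × B) = (x.1.1.1, 0) := Prod.ext rfl x.2
        simp [← hx]⟩
      invFun a := ⟨⟨(a.1, 0), a.2⟩, rfl⟩
      left_inv x := by
        ext
        · rfl
        · exact x.2.symm
      right_inv a := rfl }
  rw [← AddSubgroup.card_mul_index f.ker, AddSubgroup.index_ker, AddMonoidHom.range_comp,
    AddSubgroup.range_subtype, Nat.card_congr hker]

def goursatGraph (C : AddSubgroup B) (K : AddSubgroup A) (φ : C →+ A ⧸ K) :
    AddSubgroup (A × B) where
  carrier := {x | ∃ h : x.2 ∈ C, (x.1 : A ⧸ K) = φ ⟨x.2, h⟩}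
  zero_mem' := ⟨zero_mem C, show ((0 : A) : A ⧸ K) = φ 0 by rw [map_zero]; rfl⟩
  add_mem' := by
    rintro x y ⟨hx, hφx⟩ ⟨hy, hφy⟩
    exact ⟨add_mem hx hy, by
      rw [Prod.fst_add, QuotientAddGroup.mk_add, hφx, hφy, ← map_add]; rfl⟩
  neg_mem' := by
    rintro x ⟨hx, hφx⟩
    exact ⟨neg_mem hx, by rw [Prod.fst_neg, QuotientAddGroup.mk_neg, hφx, ← map_neg]; rfl⟩

variable {C : AddSubgroup B} {K : AddSubgroup A} {φ : C →+ A ⧸ K}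

lemma mem_goursatGraph {x : A × B} :
    x ∈ goursatGraph C K φ ↔ ∃ h : x.2 ∈ C, (x.1 : A ⧸ K) = φ ⟨x.2, h⟩ :=
  Iff.rfl

lemma goursatGraph_map_snd : (goursatGraph C K φ).map (AddMonoidHom.snd A B) = C := by
  ext b
  refine ⟨fun ⟨x, ⟨hx, _⟩, hxb⟩ => hxb ▸ hx, fun hb => ?_⟩
  obtain ⟨a, ha⟩ := QuotientAddGroup.mk_surjective (φ ⟨b, hb⟩)
  exact ⟨(a, b), ⟨hb, ha⟩, rfl⟩

lemma goursatGraph_comap_inl : (goursatGraph C K φ).comap (AddMonoidHom.inl A B) = K := by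
  ext a
  simp only [AddSubgroup.mem_comap, mem_goursatGraph, AddMonoidHom.inl_apply]
  refine ⟨fun ⟨_, ha⟩ => ?_, fun ha => ⟨zero_mem C, ?_⟩⟩
  · rwa [← (QuotientAddGroup.eq_zero_iff a), ← map_zero φ]
  · rw [(QuotientAddGroup.eq_zero_iff a).mpr ha, ← map_zero φ]; rfl

lemma card_goursatGraph : Nat.card (goursatGraph C K φ) = Nat.card K * Nat.card C := by
  rw [AddSubgroup.card_eq_card_comap_inl_mul_card_map_snd, goursatGraph_comap_inl,
    goursatGraph_map_snd]

variable (A B) in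
lemma goursatGraph_bijective :
    Function.Bijective fun x : Σ CK : AddSubgroup B × AddSubgroup A, CK.1 →+ A ⧸ CK.2 =>
      goursatGraph x.1.1 x.1.2 x.2 := by
  constructor
  · rintro ⟨⟨C, K⟩, φ⟩ ⟨⟨C', K'⟩, φ'⟩ h
    dsimp only at h
    obtain rfl : C = C' := by
      simpa only [goursatGraph_map_snd] using congrArg (AddSubgroup.map (AddMonoidHom.snd A B)) h
    obtain rfl : K = K' := by
      simpa only [goursatGraph_comap_inl] using
        congrArg (AddSubgroup.comap (AddMonoidHom.inl A B)) h
    suffices φ = φ' by rw [this]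
    ext c
    obtain ⟨a, ha⟩ := QuotientAddGroup.mk_surjective (φ c)
    obtain ⟨_, ha'⟩ : ((a, (c : B)) : A × B) ∈ goursatGraph C K φ' := h ▸ ⟨c.2, ha⟩
    exact ha.symm.trans ha'
  · intro H
    set C := H.map (AddMonoidHom.snd A B)
    set K := H.comap (AddMonoidHom.inl A B)
    set π := (AddMonoidHom.snd A B).addSubgroupMap H
    set α := (QuotientAddGroup.mk' K).comp ((AddMonoidHom.fst A B).comp H.subtype)
    have hker : π.ker ≤ α.ker := by
      rintro ⟨⟨a, b⟩, hab⟩ hx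
      obtain rfl : b = 0 := congrArg Subtype.val hx
      exact (QuotientAddGroup.eq_zero_iff a).mpr hab
    set φ : C →+ A ⧸ K :=
      π.liftOfSurjective ((AddMonoidHom.snd A B).addSubgroupMap_surjective H) ⟨α, hker⟩
    have hφ (x : H) : φ (π x) = ((x : A × B).1 : A ⧸ K) :=
      π.liftOfRightInverse_comp_apply _ _ ⟨α, hker⟩ x
    refine ⟨⟨(C, K), φ⟩, ?_⟩
    ext ⟨a, b⟩
    refine ⟨fun ⟨hb, hab⟩ => ?_, fun hab => ⟨⟨_, hab, rfl⟩, (hφ ⟨_, hab⟩).symm⟩⟩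
    obtain ⟨x, hx, hxb⟩ := id hb
    rw [show (⟨b, hb⟩ : C) = π ⟨x, hx⟩ from Subtype.ext hxb.symm, hφ, eq_comm,
      QuotientAddGroup.eq] at hab
    convert add_mem hx (show ((-x.1 + a, 0) : A × B) ∈ H from hab) using 1
    ext
    · simp
    · simpa using hxb.symm

variable (A B) in
noncomputable def goursatEquiv :
    (Σ CK : AddSubgroup B × AddSubgroup A, CK.1 →+ A ⧸ CK.2) ≃ AddSubgroup (A × B) :=
  Equiv.ofBijective _ (goursatGraph_bijective A B)

lemma index_goursatGraph [Finite A] [Finite B] :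
    (goursatGraph C K φ).index = K.index * C.index := by
  have h := (goursatGraph C K φ).card_mul_index
  rw [card_goursatGraph, Nat.card_prod, ← K.card_mul_index, ← C.card_mul_index] at h
  apply Nat.eq_of_mul_eq_mul_left (Nat.mul_pos (Nat.card_pos (α := K)) (Nat.card_pos (α := C)))
  linarith

end Goursat

section Cyclic

variable {G Q : Type*} [AddCommGroup G] [AddCommGroup Q]

lemma card_addMonoidHom_eq_card_ker_nsmul [Finite G] [IsAddCyclic G] :
    Nat.card (G →+ Q) = Nat.card (nsmulAddMonoidHom (Nat.card G) : Q →+ Q).ker := by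
  set n := Nat.card G
  have : NeZero n := ⟨Nat.card_pos.ne'⟩
  have eval : {f : ℤ →+ Q // f n = 0} ≃ (nsmulAddMonoidHom n : Q →+ Q).ker :=
    (zmultiplesHom Q).symm.subtypeEquiv fun f => by
      show f n = 0 ↔ n • f 1 = 0
      rw [← map_nsmul, nsmul_one]
  exact Nat.card_congr
    ((zmodAddCyclicAddEquiv inferInstance).addMonoidHomCongrLeftEquiv.symm.trans
      ((ZMod.lift n).symm.trans eval))

lemma card_addMonoidHom_of_card_dvd [Finite G] [IsAddCyclic G] (h : Nat.card Q ∣ Nat.card G) :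
    Nat.card (G →+ Q) = Nat.card Q := by
  obtain ⟨k, hk⟩ := h
  have htop : (nsmulAddMonoidHom (Nat.card G) : Q →+ Q).ker = ⊤ := by
    ext q
    simp [hk, mul_comm, mul_nsmul, card_nsmul_eq_zero']
  rw [card_addMonoidHom_eq_card_ker_nsmul, htop, AddSubgroup.card_top]

lemma card_addMonoidHom_of_isAddCyclic [Finite G] [IsAddCyclic G] [Finite Q] [IsAddCyclic Q] :
    Nat.card (G →+ Q) = (Nat.card Q).gcd (Nat.card G) := by
  rw [card_addMonoidHom_eq_card_ker_nsmul, IsAddCyclic.card_nsmulAddMonoidHom_ker]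

variable [Finite G] [IsAddCyclic G]

lemma IsAddCyclic.card_ker_nsmul_of_dvd {d : ℕ} (hd : d ∣ Nat.card G) :
    Nat.card (nsmulAddMonoidHom d : G →+ G).ker = d := by
  rw [IsAddCyclic.card_nsmulAddMonoidHom_ker, Nat.gcd_eq_right hd]

lemma IsAddCyclic.eq_ker_nsmul_card (H : AddSubgroup G) :
    H = (nsmulAddMonoidHom (Nat.card H) : G →+ G).ker := by
  refine AddSubgroup.eq_of_le_of_card_ge (fun x hx => ?_) ?_
  · rw [AddMonoidHom.mem_ker, nsmulAddMonoidHom_apply]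
    exact congrArg Subtype.val (card_nsmul_eq_zero' (G := H) (x := ⟨x, hx⟩))
  · rw [IsAddCyclic.card_ker_nsmul_of_dvd H.card_addSubgroup_dvd_card]

end Cyclic

lemma AddSubgroup.index_eq_prime_pow_sub {G : Type*} [AddGroup G] {H : AddSubgroup G} {p m k : ℕ}
    (hp : p.Prime) (hG : Nat.card G = p ^ m) (hH : Nat.card H = p ^ k) :
    H.index = p ^ (m - k) := by
  have hkm : k ≤ m := (Nat.pow_dvd_pow_iff_le_right hp.one_lt).mp
    (hH ▸ hG ▸ H.card_addSubgroup_dvd_card)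
  rw [← Nat.pow_div hkm hp.pos, ← hG, ← hH, ← H.card_mul_index,
    Nat.mul_div_cancel_left _ (hH ▸ pow_pos hp.pos k)]

lemma IsAddCyclic.sum_addSubgroup_of_card_eq_prime_pow {G M : Type*} [AddCommGroup G]
    [IsAddCyclic G] [Fintype (AddSubgroup G)] [AddCommMonoid M] {p m : ℕ} (hp : p.Prime)
    (hG : Nat.card G = p ^ m) (f : ℕ → ℕ → M) :
    ∑ H : AddSubgroup G, f (Nat.card H) H.index = ∑ k ∈ range (m + 1), f (p ^ k) (p ^ (m - k)) := by
  have : Finite G := Nat.finite_of_card_ne_zero (hG ▸ (pow_pos hp.pos m).ne')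
  have card_ker {k : ℕ} (hk : k ∈ range (m + 1)) :
      Nat.card (nsmulAddMonoidHom (p ^ k) : G →+ G).ker = p ^ k :=
    card_ker_nsmul_of_dvd (hG ▸ pow_dvd_pow p (Nat.lt_succ_iff.mp (mem_range.mp hk)))
  symm
  refine sum_bij (fun k _ => (nsmulAddMonoidHom (p ^ k) : G →+ G).ker) (fun _ _ => mem_univ _)
    (fun k hk l hl hkl => Nat.pow_right_injective hp.two_le ?_) (fun H _ => ?_) (fun k hk => ?_)
  · simpa only [card_ker hk, card_ker hl] using congrArg (fun H : AddSubgroup G => Nat.card H) hkl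
  · obtain ⟨k, hk, hH⟩ := (Nat.dvd_prime_pow hp).mp (hG ▸ H.card_addSubgroup_dvd_card)
    exact ⟨k, mem_range.mpr (Nat.lt_succ_of_le hk), by rw [eq_ker_nsmul_card H, hH]⟩
  · rw [card_ker hk, AddSubgroup.index_eq_prime_pow_sub hp hG (card_ker hk)]

section Counting

variable {A B : Type*} [AddCommGroup A] [AddCommGroup B] [Finite A] [Finite B]

theorem card_addSubgroup_prod_eq_sum_index [IsAddCyclic B] [Fintype (AddSubgroup A)] {N : ℕ}
    (hA : Nat.card A ∣ N) (hB : N ∣ Nat.card B) :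
    Nat.card {H : AddSubgroup (A × B) // Nat.card H = N} = ∑ K : AddSubgroup A, K.index := by
  classical
  have : Fintype (AddSubgroup B) := Fintype.ofFinite _
  have hK (K : AddSubgroup A) : Nat.card K ∣ N := K.card_addSubgroup_dvd_card.trans hA
  set cyc : AddSubgroup A → AddSubgroup B := fun K => (nsmulAddMonoidHom (N / Nat.card K)).ker
  have card_cyc (K : AddSubgroup A) : Nat.card (cyc K) = N / Nat.card K :=
    IsAddCyclic.card_ker_nsmul_of_dvd ((Nat.div_dvd_of_dvd (hK K)).trans hB)
  let e : {CK : AddSubgroup B × AddSubgroup A // Nat.card CK.2 * Nat.card CK.1 = N} ≃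
      AddSubgroup A :=
    { toFun CK := CK.1.2
      invFun K := ⟨(cyc K, K), by rw [card_cyc, Nat.mul_div_cancel' (hK K)]⟩
      left_inv := by
        rintro ⟨⟨C, K⟩, h⟩
        refine Subtype.ext (Prod.ext ?_ rfl)
        show (nsmulAddMonoidHom (N / Nat.card K)).ker = C
        dsimp only at h
        rw [← h, Nat.mul_div_cancel_left _ Nat.card_pos, ← IsAddCyclic.eq_ker_nsmul_card]
      right_inv _ := rfl }
  calc Nat.card {H : AddSubgroup (A × B) // Nat.card H = N}
      = Nat.card {x : Σ CK : AddSubgroup B × AddSubgroup A, CK.1 →+ A ⧸ CK.2 //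
          Nat.card x.1.2 * Nat.card x.1.1 = N} :=
        (Nat.card_congr ((goursatEquiv A B).subtypeEquiv fun _ => by
          rw [goursatEquiv, Equiv.ofBijective_apply, card_goursatGraph])).symm
    _ = ∑ CK : {CK : AddSubgroup B × AddSubgroup A // Nat.card CK.2 * Nat.card CK.1 = N},
          Nat.card (CK.1.1 →+ A ⧸ CK.1.2) :=
        (Nat.card_congr (Equiv.subtypeSigmaEquiv
          (fun CK : AddSubgroup B × AddSubgroup A => CK.1 →+ A ⧸ CK.2)
          fun CK => Nat.card CK.2 * Nat.card CK.1 = N)).trans Nat.card_sigma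
    _ = ∑ K : AddSubgroup A, Nat.card (cyc K →+ A ⧸ K) :=
        (Fintype.sum_equiv e.symm _ _ fun _ => rfl).symm
    _ = ∑ K : AddSubgroup A, K.index := by
        refine sum_congr rfl fun K _ => card_addMonoidHom_of_card_dvd ?_
        rw [card_cyc, ← AddSubgroup.index_eq_card]
        exact Nat.dvd_div_of_mul_dvd (K.card_mul_index ▸ hA)

theorem sum_index_addSubgroup_prod [IsAddCyclic A] [IsAddCyclic B] [Fintype (AddSubgroup A)]
    [Fintype (AddSubgroup B)] [Fintype (AddSubgroup (A × B))] :
    ∑ H : AddSubgroup (A × B), H.index =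
      ∑ C : AddSubgroup B, ∑ K : AddSubgroup A, K.index.gcd (Nat.card C) * (K.index * C.index) := by
  have (CK : AddSubgroup B × AddSubgroup A) : Fintype (CK.1 →+ A ⧸ CK.2) := Fintype.ofFinite _
  have (K : AddSubgroup A) : IsAddCyclic (A ⧸ K) :=
    isAddCyclic_of_surjective _ (QuotientAddGroup.mk'_surjective K)
  rw [← Fintype.sum_prod_type', ← (goursatEquiv A B).sum_comp, Fintype.sum_sigma]
  refine sum_congr rfl fun CK _ => ?_
  simp only [goursatEquiv, Equiv.ofBijective_apply, index_goursatGraph, sum_const, card_univ,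
    ← Nat.card_eq_fintype_card, card_addMonoidHom_of_isAddCyclic, smul_eq_mul]
  rfl

end Counting

lemma Nat.gcd_pow_pow_eq_pow_min (p u v : ℕ) : (p ^ u).gcd (p ^ v) = p ^ min u v := by
  rcases le_total u v with h | h
  · rw [Nat.gcd_eq_left (pow_dvd_pow p h), min_eq_left h]
  · rw [Nat.gcd_eq_right (pow_dvd_pow p h), min_eq_right h]

/-- The sum of the indices of all subgroups of `ℤ/p^a₁ × ℤ/p^a₂`: Goursat's data `(C, K, φ)` with
`|C| = p^t` and `[ℤ/p^a₁ : K] = p^u` give a subgroup of index `p^(u + (a₂ - t))`, and there are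
`p^(min t u)` choices of `φ`. -/
def indexSum (p a₁ a₂ : ℕ) : ℕ :=
  ∑ t ∈ range (a₂ + 1), ∑ u ∈ range (a₁ + 1), p ^ (a₂ - t + u + min t u)

lemma indexSum_succ_right {p a₁ a₂ : ℕ} (h : a₁ ≤ a₂ + 1) :
    indexSum p a₁ (a₂ + 1) = p * indexSum p a₁ a₂ + ∑ u ∈ range (a₁ + 1), p ^ (2 * u) := by
  rw [indexSum, sum_range_succ, indexSum, mul_sum]
  congr 1
  · refine sum_congr rfl fun t ht => ?_
    rw [mul_sum]
    refine sum_congr rfl fun u _ => ?_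
    rw [← pow_succ']
    congr 1
    have := mem_range.mp ht
    omega
  · refine sum_congr rfl fun u hu => ?_
    have := mem_range.mp hu
    congr 1
    omega

lemma indexSum_succ_left_self (p n : ℕ) :
    indexSum p (n + 1) (n + 1) = indexSum p n (n + 1) + (n + 2) * p ^ (2 * n + 2) := by
  have hlast (t : ℕ) (ht : t ∈ range (n + 2)) :
      ∑ u ∈ range (n + 2), p ^ (n + 1 - t + u + min t u) =
        ∑ u ∈ range (n + 1), p ^ (n + 1 - t + u + min t u) + p ^ (2 * n + 2) := by
    have := mem_range.mp ht
    rw [sum_range_succ]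
    congr 2
    omega
  rw [indexSum, sum_congr rfl hlast, sum_add_distrib, sum_const, card_range, smul_eq_mul]
  rfl

lemma geom_sum_sq_mul (p n : ℕ) :
    (∑ u ∈ range (n + 1), (p : ℤ) ^ (2 * u)) * ((p : ℤ) ^ 2 - 1) = (p : ℤ) ^ (2 * n + 2) - 1 := by
  simp only [pow_mul, show 2 * n + 2 = 2 * (n + 1) by ring]
  exact geom_sum_mul _ _

lemma indexSum_self_mul (p n : ℕ) :
    (indexSum p n n : ℤ) * (((p : ℤ) - 1) * ((p : ℤ) ^ 2 - 1)) =
      ((n : ℤ) + 1) * (p : ℤ) ^ (n + n + 3) - (n : ℤ) * (p : ℤ) ^ (n + n + 1)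
        - (p : ℤ) ^ (2 * n + 2) - (p : ℤ) ^ (n + n + 1) + 1 := by
  induction n with
  | zero => simp [indexSum]; ring
  | succ n ih =>
    have h := congrArg (Nat.cast : ℕ → ℤ)
      ((indexSum_succ_left_self p n).trans (by rw [indexSum_succ_right le_self_add]))
    push_cast at h ⊢
    linear_combination ((p : ℤ) - 1) * ((p : ℤ) ^ 2 - 1) * h + (p : ℤ) * ih +
      ((p : ℤ) - 1) * geom_sum_sq_mul p n

lemma indexSum_mul (p : ℕ) {a₁ a₂ : ℕ} (h : a₁ ≤ a₂) :
    (indexSum p a₁ a₂ : ℤ) * (((p : ℤ) - 1) * ((p : ℤ) ^ 2 - 1)) =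
      ((a₁ : ℤ) + 1) * (p : ℤ) ^ (a₁ + a₂ + 3) - (a₁ : ℤ) * (p : ℤ) ^ (a₁ + a₂ + 1)
        - (p : ℤ) ^ (2 * a₁ + 2) - (p : ℤ) ^ (a₁ + a₂ + 1) + 1 := by
  induction a₂, h using Nat.le_induction with
  | base => exact indexSum_self_mul p a₁
  | succ m hm ih =>
    have h := congrArg (Nat.cast : ℕ → ℤ)
      (indexSum_succ_right (p := p) (a₁ := a₁) (a₂ := m) (by omega))
    push_cast at h ⊢
    linear_combination ((p : ℤ) - 1) * ((p : ℤ) ^ 2 - 1) * h + (p : ℤ) * ih +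
      ((p : ℤ) - 1) * geom_sum_sq_mul p a₁

theorem sum_index_addSubgroup_zmod_prod {p : ℕ} (hp : p.Prime) (a₁ a₂ : ℕ)
    [Fintype (AddSubgroup (ZMod (p ^ a₁) × ZMod (p ^ a₂)))] :
    ∑ H : AddSubgroup (ZMod (p ^ a₁) × ZMod (p ^ a₂)), H.index = indexSum p a₁ a₂ := by
  have : NeZero (p ^ a₁) := ⟨pow_ne_zero _ hp.ne_zero⟩
  have : NeZero (p ^ a₂) := ⟨pow_ne_zero _ hp.ne_zero⟩
  have := Fintype.ofFinite (AddSubgroup (ZMod (p ^ a₁)))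
  have := Fintype.ofFinite (AddSubgroup (ZMod (p ^ a₂)))
  rw [sum_index_addSubgroup_prod,
    IsAddCyclic.sum_addSubgroup_of_card_eq_prime_pow hp (Nat.card_zmod _) fun c i =>
      ∑ K : AddSubgroup (ZMod (p ^ a₁)), K.index.gcd c * (K.index * i)]
  refine sum_congr rfl fun t ht => ?_
  rw [IsAddCyclic.sum_addSubgroup_of_card_eq_prime_pow hp (Nat.card_zmod _)
    fun _ i => i.gcd (p ^ t) * (i * p ^ (a₂ - t)), ← sum_range_reflect]
  refine sum_congr rfl fun u hu => ?_
  have := mem_range.mp hu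
  rw [Nat.gcd_pow_pow_eq_pow_min, ← pow_add, ← pow_add, Nat.add_sub_cancel,
    Nat.sub_sub_self (by omega)]
  congr 1
  omega

theorem rank3_case5_general (p a₁ a₂ a₃ b : ℕ) (hp : p.Prime)
    (h12 : a₁ ≤ a₂) (hb1 : a₁ + a₂ ≤ b) (hb2 : b ≤ a₃) :
    (Nat.card {H : AddSubgroup (ZMod (p ^ a₁) × ZMod (p ^ a₂) × ZMod (p ^ a₃)) //
        Nat.card H = p ^ b} : ℤ) * (((p : ℤ) - 1) * ((p : ℤ) ^ 2 - 1)) =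
      ((a₁ : ℤ) + 1) * (p : ℤ) ^ (a₁ + a₂ + 3) + (p : ℤ) ^ (a₁ + a₂ + 2)
        - (a₁ : ℤ) * (p : ℤ) ^ (a₁ + a₂ + 1) - (p : ℤ) ^ (2 * a₁ + 2)
        - (p : ℤ) ^ (a₁ + a₂ + 2) - (p : ℤ) ^ (a₁ + a₂ + 1) + 1 := by
  have : NeZero (p ^ a₁) := ⟨pow_ne_zero _ hp.ne_zero⟩
  have : NeZero (p ^ a₂) := ⟨pow_ne_zero _ hp.ne_zero⟩
  have : NeZero (p ^ a₃) := ⟨pow_ne_zero _ hp.ne_zero⟩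
  have := Fintype.ofFinite (AddSubgroup (ZMod (p ^ a₁) × ZMod (p ^ a₂)))
  let assoc : (ZMod (p ^ a₁) × ZMod (p ^ a₂)) × ZMod (p ^ a₃) ≃+ _ := AddEquiv.prodAssoc
  have hcount : Nat.card {H : AddSubgroup (ZMod (p ^ a₁) × ZMod (p ^ a₂) × ZMod (p ^ a₃)) //
      Nat.card H = p ^ b} = indexSum p a₁ a₂ := by
    rw [← Nat.card_congr (assoc.mapAddSubgroup.toEquiv.subtypeEquiv fun H => ?_),
      card_addSubgroup_prod_eq_sum_index, sum_index_addSubgroup_zmod_prod hp]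
    · simp only [Nat.card_prod, Nat.card_zmod, ← pow_add]
      exact pow_dvd_pow p hb1
    · simp only [Nat.card_zmod]
      exact pow_dvd_pow p hb2
    · rw [RelIso.coe_fn_toEquiv, AddEquiv.mapAddSubgroup_apply,
        AddSubgroup.card_map_of_injective assoc.injective]
  rw [hcount, indexSum_mul p h12]
  ring

/-- Case 5 (`a₁ + a₂ ≤ b ≤ a₃`) of the rank-3 subgroup counting theorem. -/
theorem rank3_case5 (p a₁ a₂ a₃ b : ℕ) (hp : p.Prime)
    (ha₁ : 1 ≤ a₁) (h12 : a₁ ≤ a₂) (h23 : a₂ ≤ a₃)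
    (hb1 : a₁ + a₂ ≤ b) (hb2 : b ≤ a₃) :
    (Nat.card {H : AddSubgroup (ZMod (p ^ a₁) × ZMod (p ^ a₂) × ZMod (p ^ a₃)) //
        Nat.card H = p ^ b} : ℤ) * (((p : ℤ) - 1) * ((p : ℤ) ^ 2 - 1)) =
      ((a₁ : ℤ) + 1) * (p : ℤ) ^ (a₁ + a₂ + 3) + (p : ℤ) ^ (a₁ + a₂ + 2)
        - (a₁ : ℤ) * (p : ℤ) ^ (a₁ + a₂ + 1) - (p : ℤ) ^ (2 * a₁ + 2)
        - (p : ℤ) ^ (a₁ + a₂ + 2) - (p : ℤ) ^ (a₁ + a₂ + 1) + 1 :=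
  rank3_case5_general p a₁ a₂ a₃ b hp h12 hb1 hb2
end

section
/- Let p be a prime and let a_1, a_2, a_3 be integers with 1 ≤ a_1 ≤ a_2 ≤ a_3. If b is an integer with a_1 + a_3 ≤ b ≤ a_2 + a_3, then the number h_b of subgroups of order p^b in ℤ/p^{a_1} × ℤ/p^{a_2} × ℤ/p^{a_3} satisfies h_b · (p-1)(p^2-1) = p^{2a_1+a_2+a_3-b+3} + p^{2a_1+a_2+a_3-b+2} - p^{2a_1+2} - p^{a_1+a_2+a_3-b+2} - p^{a_1+a_2+a_3-b+1} + 1. -/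
open Finset

namespace Rank3Case9

variable {A C : Type*} [AddCommGroup A] [AddCommGroup C]

/-- The "intersection with the first factor" subgroup. -/
def toK (H : AddSubgroup (A × C)) : AddSubgroup A := H.comap (AddMonoidHom.inl A C)

/-- The projection to the second factor. -/
def toD (H : AddSubgroup (A × C)) : AddSubgroup C := H.map (AddMonoidHom.snd A C)

lemma mem_toK {H : AddSubgroup (A × C)} {a : A} : a ∈ toK H ↔ (a, (0 : C)) ∈ H := Iff.rfl

lemma mem_toD {H : AddSubgroup (A × C)} {c : C} : c ∈ toD H ↔ ∃ a : A, (a, c) ∈ H := by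
  constructor
  · rintro ⟨⟨a, c'⟩, hx, rfl⟩
    exact ⟨a, hx⟩
  · rintro ⟨a, ha⟩
    exact ⟨(a, c), ha, rfl⟩

/-- The subgroup of `A × C` built from `K ≤ A`, `D ≤ C` and `φ : D →+ A⧸K`. -/
def glue (K : AddSubgroup A) (D : AddSubgroup C) (φ : D →+ A ⧸ K) : AddSubgroup (A × C) where
  carrier := {x | ∃ h : x.2 ∈ D, (QuotientAddGroup.mk x.1 : A ⧸ K) = φ ⟨x.2, h⟩}
  zero_mem' := by
    refine ⟨zero_mem D, ?_⟩
    show (QuotientAddGroup.mk (0 : A) : A ⧸ K) = φ ⟨(0 : C), zero_mem D⟩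
    have h0 : (⟨(0 : C), zero_mem D⟩ : D) = 0 := rfl
    rw [h0, map_zero]
    rfl
  add_mem' := by
    intro x y hx hy
    obtain ⟨h₁, e₁⟩ := hx
    obtain ⟨h₂, e₂⟩ := hy
    refine ⟨add_mem h₁ h₂, ?_⟩
    show (QuotientAddGroup.mk (x.1 + y.1) : A ⧸ K) = φ ⟨x.2 + y.2, add_mem h₁ h₂⟩
    have h0 : (⟨x.2 + y.2, add_mem h₁ h₂⟩ : D) = ⟨x.2, h₁⟩ + ⟨y.2, h₂⟩ := rfl
    rw [h0, map_add, ← e₁, ← e₂]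
    rfl
  neg_mem' := by
    intro x hx
    obtain ⟨h, e⟩ := hx
    refine ⟨neg_mem h, ?_⟩
    show (QuotientAddGroup.mk (-x.1) : A ⧸ K) = φ ⟨-x.2, neg_mem h⟩
    have h0 : (⟨-x.2, neg_mem h⟩ : D) = -⟨x.2, h⟩ := rfl
    rw [h0, map_neg, ← e]
    rfl

lemma mem_glue {K : AddSubgroup A} {D : AddSubgroup C} {φ : D →+ A ⧸ K} {x : A × C} :
    x ∈ glue K D φ ↔ ∃ h : x.2 ∈ D, (QuotientAddGroup.mk x.1 : A ⧸ K) = φ ⟨x.2, h⟩ := Iff.rfl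

section Fiber

variable (K : AddSubgroup A) (D : AddSubgroup C)

/-- The restriction of the second projection to `H`, as a hom into `D`. -/
def projD (H : AddSubgroup (A × C)) (h2 : toD H = D) : H →+ D :=
  AddMonoidHom.codRestrict ((AddMonoidHom.snd A C).comp H.subtype) D
    (fun x => by
      rw [← h2]
      exact ⟨x.1, x.2, rfl⟩)

lemma projD_surjective (H : AddSubgroup (A × C)) (h2 : toD H = D) :
    Function.Surjective (projD D H h2) := by
  rintro ⟨d, hd⟩
  rw [← h2, mem_toD] at hd
  obtain ⟨a, ha⟩ := hd
  exact ⟨⟨(a, d), ha⟩, rfl⟩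

/-- The first projection followed by the quotient map, on `H`. -/
def projQ (H : AddSubgroup (A × C)) : H →+ A ⧸ K :=
  (QuotientAddGroup.mk' K).comp ((AddMonoidHom.fst A C).comp H.subtype)

lemma ker_le (H : AddSubgroup (A × C)) (h1 : toK H = K) (h2 : toD H = D) :
    (projD D H h2).ker ≤ (projQ K H).ker := by
  rintro ⟨⟨a, c⟩, hx⟩ hk
  have hc : c = 0 := congrArg Subtype.val hk
  subst hc
  have : a ∈ K := h1 ▸ (mem_toK.mpr hx)
  simpa [projQ, AddMonoidHom.mem_ker, QuotientAddGroup.eq_zero_iff] using this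

/-- The hom `D →+ A ⧸ K` extracted from `H`. -/
noncomputable def toPhi (H : AddSubgroup (A × C)) (h1 : toK H = K) (h2 : toD H = D) :
    D →+ A ⧸ K :=
  ((projD D H h2).liftOfRightInverse (Function.surjInv (projD_surjective D H h2))
    (Function.rightInverse_surjInv (projD_surjective D H h2)))
    ⟨projQ K H, ker_le K D H h1 h2⟩

lemma toPhi_spec (H : AddSubgroup (A × C)) (h1 : toK H = K) (h2 : toD H = D) (x : H) :
    toPhi K D H h1 h2 (projD D H h2 x) = QuotientAddGroup.mk x.1.1 :=
  AddMonoidHom.liftOfRightInverse_comp_apply _ _ _ _ x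

end Fiber

section Fiber2

variable (K : AddSubgroup A) (D : AddSubgroup C)

lemma toK_glue (φ : D →+ A ⧸ K) : toK (glue K D φ) = K := by
  ext a
  rw [mem_toK, mem_glue]
  constructor
  · rintro ⟨h, e⟩
    have h0 : (⟨(0 : C), h⟩ : D) = 0 := rfl
    rw [h0, map_zero] at e
    exact (QuotientAddGroup.eq_zero_iff a).mp e
  · intro ha
    refine ⟨zero_mem D, ?_⟩
    have h0 : (⟨(0 : C), zero_mem D⟩ : D) = 0 := rfl
    rw [h0, map_zero]
    exact (QuotientAddGroup.eq_zero_iff a).mpr ha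

lemma toD_glue (φ : D →+ A ⧸ K) : toD (glue K D φ) = D := by
  ext c
  rw [mem_toD]
  constructor
  · rintro ⟨a, h, _⟩
    exact h
  · intro hc
    obtain ⟨a, ha⟩ := QuotientAddGroup.mk_surjective (φ ⟨c, hc⟩)
    exact ⟨a, hc, ha⟩

/-- The fiber of `H ↦ (toK H, toD H)` over `(K, D)` is the set of homs `D →+ A ⧸ K`. -/
noncomputable def fiberEquiv :
    {H : AddSubgroup (A × C) // toK H = K ∧ toD H = D} ≃ (D →+ A ⧸ K) where
  toFun H := toPhi K D H.1 H.2.1 H.2.2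
  invFun φ := ⟨glue K D φ, toK_glue K D φ, toD_glue K D φ⟩
  left_inv := by
    rintro ⟨H, h1, h2⟩
    apply Subtype.ext
    show glue K D (toPhi K D H h1 h2) = H
    ext x
    rw [mem_glue]
    constructor
    · rintro ⟨hd, e⟩
      have hd' : x.2 ∈ toD H := h2.symm ▸ hd
      obtain ⟨a, ha⟩ := mem_toD.mp hd'
      have hy : toPhi K D H h1 h2 (projD D H h2 ⟨(a, x.2), ha⟩) = QuotientAddGroup.mk a :=
        toPhi_spec K D H h1 h2 _
      have hproj : projD D H h2 ⟨(a, x.2), ha⟩ = ⟨x.2, hd⟩ := Subtype.ext rfl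
      rw [hproj] at hy
      rw [hy] at e
      have hk : -x.1 + a ∈ K := (QuotientAddGroup.eq).mp e
      have hk0 : -x.1 + a ∈ toK H := by rw [h1]; exact hk
      have hmem : (-x.1 + a, (0 : C)) ∈ H := mem_toK.mp hk0
      have hx2 : x = (a, x.2) - (-x.1 + a, (0 : C)) := by
        rw [Prod.ext_iff]
        refine ⟨?_, ?_⟩
        · show x.1 = ((a, x.2) - (-x.1 + a, (0 : C))).1
          rw [Prod.fst_sub]
          rw [sub_add_eq_sub_sub, sub_neg_eq_add, add_sub_cancel_left]
        · show x.2 = ((a, x.2) - (-x.1 + a, (0 : C))).2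
          rw [Prod.snd_sub, sub_zero]
      rw [hx2]
      exact sub_mem ha hmem
    · intro hx
      have hd : x.2 ∈ D := h2 ▸ (mem_toD.mpr ⟨x.1, hx⟩)
      refine ⟨hd, ?_⟩
      have hy : toPhi K D H h1 h2 (projD D H h2 ⟨x, hx⟩) = QuotientAddGroup.mk x.1 :=
        toPhi_spec K D H h1 h2 _
      have hproj : projD D H h2 ⟨x, hx⟩ = ⟨x.2, hd⟩ := Subtype.ext rfl
      rw [hproj] at hy
      exact hy.symm
  right_inv := by
    intro φ
    apply AddMonoidHom.ext
    intro d
    obtain ⟨x, hx⟩ := projD_surjective D (glue K D φ) (toD_glue K D φ) d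
    rw [← hx]
    rw [toPhi_spec]
    obtain ⟨h, e⟩ := x.2
    rw [e]
    exact congrArg φ (Subtype.ext rfl)

end Fiber2


section Card

variable (K : AddSubgroup A) (D : AddSubgroup C)

/-- The kernel of `projD` is equivalent to `K`. -/
def kerEquiv (H : AddSubgroup (A × C)) (h1 : toK H = K) (h2 : toD H = D) :
    (projD D H h2).ker ≃ K where
  toFun x := ⟨(x.1 : A × C).1, by
    have hc : (x.1 : A × C).2 = 0 := congrArg Subtype.val x.2
    have hmem : ((x.1 : A × C).1, (0 : C)) ∈ H := by rw [← hc]; exact x.1.2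
    rw [← h1]
    exact mem_toK.mpr hmem⟩
  invFun a := ⟨⟨((a : A), (0 : C)), mem_toK.mp (by rw [h1]; exact a.2)⟩, Subtype.ext rfl⟩
  left_inv := by
    rintro x
    have hc : (x.1 : A × C).2 = 0 := congrArg Subtype.val x.2
    apply Subtype.ext
    apply Subtype.ext
    rw [Prod.ext_iff]
    exact ⟨rfl, hc.symm⟩
  right_inv := by
    intro a
    apply Subtype.ext
    rfl

lemma card_fiber_eq (H : AddSubgroup (A × C)) (h1 : toK H = K) (h2 : toD H = D) :
    Nat.card H = Nat.card K * Nat.card D := by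
  have hq := AddSubgroup.card_eq_card_quotient_mul_card_addSubgroup ((projD D H h2).ker)
  have e1 : Nat.card ((↥H) ⧸ (projD D H h2).ker) = Nat.card D :=
    Nat.card_congr (QuotientAddGroup.quotientKerEquivOfSurjective _
      (projD_surjective D H h2)).toEquiv
  have e2 : Nat.card ((projD D H h2).ker) = Nat.card K :=
    Nat.card_congr (kerEquiv K D H h1 h2)
  rw [hq, e1, e2, mul_comm]

end Card


instance addSubgroupFinite {G : Type*} [AddGroup G] [Finite G] : Finite (AddSubgroup G) :=
  Finite.of_injective (fun H => (H : Set G)) SetLike.coe_injective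

open scoped Classical in
lemma prod_count [Finite A] [Finite C]
    [Fintype (AddSubgroup A)] [Fintype (AddSubgroup C)] (n : ℕ) :
    Nat.card {H : AddSubgroup (A × C) // Nat.card H = n}
      = ∑ K : AddSubgroup A, ∑ D : AddSubgroup C,
          if Nat.card K * Nat.card D = n then Nat.card (D →+ A ⧸ K) else 0 := by
  classical
  letI : Fintype (AddSubgroup (A × C)) := Fintype.ofFinite _
  rw [Nat.card_eq_fintype_card, Fintype.card_subtype]
  rw [Finset.card_eq_sum_card_fiberwise
      (f := fun H : AddSubgroup (A × C) => (toK H, toD H))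
      (t := Finset.univ) (fun x _ => Finset.mem_univ _)]
  rw [Fintype.sum_prod_type]
  refine Finset.sum_congr rfl fun K _ => Finset.sum_congr rfl fun D _ => ?_
  rw [Finset.filter_filter]
  by_cases h : Nat.card K * Nat.card D = n
  · rw [if_pos h]
    have hset : (Finset.univ.filter
          fun H : AddSubgroup (A × C) => Nat.card H = n ∧ (toK H, toD H) = (K, D))
        = Finset.univ.filter fun H : AddSubgroup (A × C) => toK H = K ∧ toD H = D := by
      ext H
      simp only [Finset.mem_filter, Finset.mem_univ, true_and]
      constructor
      · rintro ⟨-, hp⟩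
        rw [Prod.mk.injEq] at hp
        exact hp
      · rintro ⟨h1, h2⟩
        exact ⟨by rw [card_fiber_eq K D H h1 h2, h], by rw [h1, h2]⟩
    rw [hset, ← Fintype.card_subtype, ← Nat.card_eq_fintype_card]
    exact Nat.card_congr (fiberEquiv K D)
  · rw [if_neg h]
    rw [Finset.card_eq_zero]
    apply Finset.filter_false_of_mem
    intro H _
    rintro ⟨hn, hp⟩
    rw [Prod.mk.injEq] at hp
    exact h (by rw [← card_fiber_eq K D H hp.1 hp.2, hn])


section Cyclic

lemma zmod_card_subgroup_dvd {N : ℕ} [NeZero N] (D : AddSubgroup (ZMod N)) :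
    Nat.card D ∣ N := by
  have := AddSubgroup.card_addSubgroup_dvd_card D
  rwa [Nat.card_zmod] at this

lemma zmod_exists_subgroup {N : ℕ} [NeZero N] {d : ℕ} (hd : d ∣ N) :
    ∃ D : AddSubgroup (ZMod N), Nat.card D = d := by
  refine ⟨AddSubgroup.zmultiples (((N / d : ℕ) : ZMod N)), ?_⟩
  rw [Nat.card_zmultiples]
  rw [ZMod.addOrderOf_coe _ (NeZero.ne N)]
  rw [Nat.gcd_eq_right (Nat.div_dvd_of_dvd hd)]
  exact Nat.div_div_self hd (NeZero.ne N)

lemma nsmul_card_subgroup_eq_zero {G : Type*} [AddGroup G] [Finite G]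
    (D : AddSubgroup G) {x : G} (hx : x ∈ D) : Nat.card D • x = 0 := by
  have h0 : (Nat.card D) • (⟨x, hx⟩ : D) = 0 := card_nsmul_eq_zero'
  calc Nat.card D • x = ((Nat.card D • (⟨x, hx⟩ : D) : D) : G) := rfl
    _ = ((0 : D) : G) := by rw [h0]
    _ = 0 := rfl

lemma zmod_subgroup_eq_of_card_eq {N : ℕ} [NeZero N] (D₁ D₂ : AddSubgroup (ZMod N))
    (h : Nat.card D₁ = Nat.card D₂) : D₁ = D₂ := by
  classical
  have hd0 : 0 < Nat.card D₁ := Nat.card_pos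
  have hTcard : (Finset.univ.filter (fun x : ZMod N => Nat.card D₁ • x = 0)).card
      ≤ Nat.card D₁ := IsAddCyclic.card_nsmul_eq_zero_le hd0
  have sub1 : (D₁ : Set (ZMod N)).toFinset
      ⊆ Finset.univ.filter (fun x : ZMod N => Nat.card D₁ • x = 0) := by
    intro x hx
    rw [Set.mem_toFinset] at hx
    rw [Finset.mem_filter]
    exact ⟨Finset.mem_univ _, nsmul_card_subgroup_eq_zero D₁ hx⟩
  have sub2 : (D₂ : Set (ZMod N)).toFinset
      ⊆ Finset.univ.filter (fun x : ZMod N => Nat.card D₁ • x = 0) := by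
    intro x hx
    rw [Set.mem_toFinset] at hx
    rw [Finset.mem_filter]
    refine ⟨Finset.mem_univ _, ?_⟩
    rw [h]
    exact nsmul_card_subgroup_eq_zero D₂ hx
  have c1 : (D₁ : Set (ZMod N)).toFinset.card = Nat.card D₁ := by
    rw [Set.toFinset_card, ← Nat.card_eq_fintype_card]
    rfl
  have c2 : (D₂ : Set (ZMod N)).toFinset.card = Nat.card D₁ := by
    rw [Set.toFinset_card, ← Nat.card_eq_fintype_card, h]
    rfl
  have e1 : (D₁ : Set (ZMod N)).toFinset
      = Finset.univ.filter (fun x : ZMod N => Nat.card D₁ • x = 0) :=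
    Finset.eq_of_subset_of_card_le sub1 (by rw [c1]; exact hTcard)
  have e2 : (D₂ : Set (ZMod N)).toFinset
      = Finset.univ.filter (fun x : ZMod N => Nat.card D₁ • x = 0) :=
    Finset.eq_of_subset_of_card_le sub2 (by rw [c2]; exact hTcard)
  apply SetLike.coe_injective
  rw [← Set.toFinset_inj, e1, e2]

end Cyclic


section Homs

lemma card_hom_zmod (n : ℕ) (Q : Type*) [AddCommGroup Q] (h : ∀ x : Q, n • x = 0) :
    Nat.card (ZMod n →+ Q) = Nat.card Q := by
  refine Nat.card_congr ⟨fun f => f 1, fun x => ZMod.lift n ⟨(zmultiplesHom Q) x, ?_⟩, ?_, ?_⟩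
  · show (n : ℤ) • x = 0
    rw [natCast_zsmul]
    exact h x
  · intro f
    apply AddMonoidHom.ext
    intro z
    obtain ⟨k, rfl⟩ := ZMod.intCast_surjective z
    rw [ZMod.lift_coe]
    show k • f 1 = f ((k : ℤ) : ZMod n)
    rw [show ((k : ℤ) : ZMod n) = k • (1 : ZMod n) by rw [zsmul_one], map_zsmul]
  · intro x
    show ZMod.lift n ⟨(zmultiplesHom Q) x, _⟩ (1 : ZMod n) = x
    rw [show (1 : ZMod n) = ((1 : ℤ) : ZMod n) by rw [Int.cast_one], ZMod.lift_coe]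
    exact one_zsmul x

lemma card_hom_congr {M N Q : Type*} [AddCommGroup M] [AddCommGroup N] [AddCommGroup Q]
    (e : M ≃+ N) : Nat.card (M →+ Q) = Nat.card (N →+ Q) :=
  Nat.card_congr ⟨fun f => f.comp e.symm.toAddMonoidHom, fun g => g.comp e.toAddMonoidHom,
    fun f => by ext x; simp, fun g => by ext x; simp⟩

lemma card_hom_subgroup {N : ℕ} [NeZero N] (D : AddSubgroup (ZMod N)) (Q : Type*)
    [AddCommGroup Q] [Finite Q] (h : Nat.card Q ∣ Nat.card D) :
    Nat.card (D →+ Q) = Nat.card Q := by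
  have e : ZMod (Nat.card D) ≃+ D := zmodAddCyclicAddEquiv inferInstance
  refine (card_hom_congr e.symm).trans (card_hom_zmod _ _ fun x => ?_)
  have h1 : addOrderOf x ∣ Nat.card D := (addOrderOf_dvd_natCard x).trans h
  exact addOrderOf_dvd_iff_nsmul_eq_zero.mp h1

end Homs

lemma count_prod_cyclic (p : ℕ) (hp : p.Prime) (X : Type*) [AddCommGroup X] [Finite X]
    [Fintype (AddSubgroup X)] (e s : ℕ) (hX : Nat.card X ∣ p ^ s) :
    Nat.card {H : AddSubgroup (X × ZMod (p ^ e)) // Nat.card H = p ^ s}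
      = ∑ K : AddSubgroup X,
          if Nat.card K ∣ p ^ s ∧ p ^ s ≤ Nat.card K * p ^ e
          then Nat.card X / Nat.card K else 0 := by
  classical
  haveI : NeZero (p ^ e) := ⟨pow_ne_zero e hp.pos.ne'⟩
  letI : Fintype (AddSubgroup (ZMod (p ^ e))) := Fintype.ofFinite _
  rw [prod_count (p ^ s)]
  refine Finset.sum_congr rfl fun K _ => ?_
  have hKpos : 0 < Nat.card K := Nat.card_pos
  have hQcard : Nat.card (X ⧸ K) * Nat.card K = Nat.card X :=
    (AddSubgroup.card_eq_card_quotient_mul_card_addSubgroup K).symm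
  by_cases hcond : Nat.card K ∣ p ^ s ∧ p ^ s ≤ Nat.card K * p ^ e
  · rw [if_pos hcond]
    obtain ⟨k, hks, hK⟩ := (Nat.dvd_prime_pow hp).mp hcond.1
    have hkt : p ^ k * p ^ (s - k) = p ^ s := by
      rw [← pow_add]
      congr 1
      omega
    have hte : s - k ≤ e := by
      have h2 := hcond.2
      rw [hK, ← pow_add] at h2
      have := (Nat.pow_le_pow_iff_right hp.one_lt).mp h2
      omega
    obtain ⟨D₀, hD₀⟩ := zmod_exists_subgroup (N := p ^ e) (d := p ^ (s - k))
      (pow_dvd_pow p hte)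
    have hXs : Nat.card X ∣ p ^ (s - k) * Nat.card K := by
      rw [hK, ← pow_add, show s - k + k = s by omega]
      exact hX
    rw [← hQcard] at hXs
    have hQdvd : Nat.card (X ⧸ K) ∣ p ^ (s - k) := (Nat.mul_dvd_mul_iff_right hKpos).mp hXs
    have hsum : ∀ D : AddSubgroup (ZMod (p ^ e)),
        (Nat.card K * Nat.card D = p ^ s) ↔ Nat.card D = p ^ (s - k) := by
      intro D
      rw [hK]
      constructor
      · intro hmul
        exact Nat.eq_of_mul_eq_mul_left (pow_pos hp.pos k) (by rw [hmul, ← hkt])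
      · intro hD
        rw [hD, hkt]
    rw [Finset.sum_eq_single D₀]
    · rw [if_pos ((hsum D₀).mpr hD₀),
        card_hom_subgroup D₀ _ (by rw [hD₀]; exact hQdvd),
        Nat.div_eq_of_eq_mul_left hKpos hQcard.symm]
    · intro D _ hD
      rw [if_neg]
      intro hc
      exact hD (zmod_subgroup_eq_of_card_eq D D₀ (by rw [(hsum D).mp hc, hD₀]))
    · intro hmem
      exact absurd (Finset.mem_univ D₀) hmem
  · rw [if_neg hcond]
    apply Finset.sum_eq_zero
    intro D _
    rw [if_neg]
    intro hc
    apply hcond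
    refine ⟨⟨Nat.card D, hc.symm⟩, ?_⟩
    have hD : Nat.card D ∣ p ^ e := zmod_card_subgroup_dvd D
    have hle : Nat.card D ≤ p ^ e := Nat.le_of_dvd (pow_pos hp.pos e) hD
    calc p ^ s = Nat.card K * Nat.card D := hc.symm
      _ ≤ Nat.card K * p ^ e := Nat.mul_le_mul_left _ hle


open scoped Classical in
lemma sum_subgroup_by_card (p x : ℕ) (hp : p.Prime) (X : Type*) [AddCommGroup X] [Finite X]
    [Fintype (AddSubgroup X)] (hX : Nat.card X = p ^ x) (f : ℕ → ℕ) :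
    ∑ K : AddSubgroup X, f (Nat.card K)
      = ∑ m ∈ Finset.range (x + 1),
          (Finset.univ.filter fun K : AddSubgroup X => Nat.card K = p ^ m).card * f (p ^ m) := by
  classical
  have key : ∀ K : AddSubgroup X, ∃ m, m ≤ x ∧ Nat.card K = p ^ m := by
    intro K
    have hdvd : Nat.card K ∣ p ^ x := hX ▸ AddSubgroup.card_addSubgroup_dvd_card K
    obtain ⟨m, hm, he⟩ := (Nat.dvd_prime_pow hp).mp hdvd
    exact ⟨m, hm, he⟩
  set ι : AddSubgroup X → ℕ := fun K => Classical.choose (key K) with hι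
  have hι1 : ∀ K : AddSubgroup X, ι K ≤ x := fun K => (Classical.choose_spec (key K)).1
  have hι2 : ∀ K : AddSubgroup X, Nat.card K = p ^ ι K := fun K => (Classical.choose_spec (key K)).2
  rw [← Finset.sum_fiberwise_of_maps_to (g := ι)
    (fun K _ => Finset.mem_range.mpr (Nat.lt_succ_of_le (hι1 K)))
    (fun K => f (Nat.card K))]
  refine Finset.sum_congr rfl fun m hm => ?_
  have hfilter : (Finset.univ.filter fun K : AddSubgroup X => ι K = m)
      = Finset.univ.filter fun K : AddSubgroup X => Nat.card K = p ^ m := by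
    ext K
    simp only [Finset.mem_filter, Finset.mem_univ, true_and]
    constructor
    · rintro rfl
      exact hι2 K
    · intro h
      exact (Nat.pow_right_injective hp.two_le (by show p ^ m = p ^ ι K; rw [← h]; exact hι2 K)).symm
  rw [hfilter, Finset.sum_congr rfl (fun K hK => by
    rw [(Finset.mem_filter.mp hK).2]), Finset.sum_const, smul_eq_mul]

lemma zmod_filter_card_eq_one (p e t : ℕ) (hp : p.Prime) (ht : t ≤ e)
    [Fintype (AddSubgroup (ZMod (p ^ e)))] :
    (Finset.univ.filter fun D : AddSubgroup (ZMod (p ^ e)) => Nat.card D = p ^ t).card = 1 := by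
  classical
  haveI : NeZero (p ^ e) := ⟨pow_ne_zero e hp.pos.ne'⟩
  obtain ⟨D₀, hD₀⟩ := zmod_exists_subgroup (N := p ^ e) (d := p ^ t) (pow_dvd_pow p ht)
  rw [Finset.card_eq_one]
  refine ⟨D₀, ?_⟩
  ext D
  simp only [Finset.mem_filter, Finset.mem_univ, true_and, Finset.mem_singleton]
  constructor
  · intro h
    exact zmod_subgroup_eq_of_card_eq D D₀ (by rw [h, hD₀])
  · rintro rfl
    exact hD₀

lemma map_map_symm {G G' : Type*} [AddGroup G] [AddGroup G'] (e : G ≃+ G') (H : AddSubgroup G) :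
    (H.map e.toAddMonoidHom).map e.symm.toAddMonoidHom = H := by
  rw [AddSubgroup.map_map]
  have h0 : e.symm.toAddMonoidHom.comp e.toAddMonoidHom = AddMonoidHom.id G := by
    ext x
    simp
  rw [h0, AddSubgroup.map_id]

lemma card_subgroup_transport {G G' : Type*} [AddGroup G] [AddGroup G'] (e : G ≃+ G') (n : ℕ) :
    Nat.card {H : AddSubgroup G // Nat.card H = n}
      = Nat.card {H : AddSubgroup G' // Nat.card H = n} := by
  have hcard : ∀ (H : AddSubgroup G), Nat.card (H.map e.toAddMonoidHom) = Nat.card H :=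
    fun H => (Nat.card_congr (e.addSubgroupMap H).toEquiv).symm
  have hcard' : ∀ (H : AddSubgroup G'), Nat.card (H.map e.symm.toAddMonoidHom) = Nat.card H :=
    fun H => (Nat.card_congr (e.symm.addSubgroupMap H).toEquiv).symm
  refine Nat.card_congr ⟨fun H => ⟨H.1.map e.toAddMonoidHom, by rw [hcard, H.2]⟩,
    fun H => ⟨H.1.map e.symm.toAddMonoidHom, by rw [hcard', H.2]⟩, ?_, ?_⟩
  · rintro ⟨H, hH⟩
    exact Subtype.ext (map_map_symm e H)
  · rintro ⟨H, hH⟩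
    apply Subtype.ext
    exact map_map_symm e.symm H


lemma arith (q : ℤ) (a c : ℕ) (hac : a ≤ c) :
    (∑ i ∈ Finset.range (c + 1), (∑ j ∈ Finset.range (min i a + 1), q ^ j) * q ^ i)
        * ((q - 1) * (q ^ 2 - 1))
      = q ^ (a + c + 3) + q ^ (a + c + 2) - q ^ (2 * a + 2) - q ^ (c + 2) - q ^ (c + 1) + 1 := by
  rw [← Finset.sum_range_add_sum_Ico _ (show a ≤ c + 1 by omega)]
  have hterm1 : ∑ i ∈ Finset.range a, (∑ j ∈ Finset.range (min i a + 1), q ^ j) * q ^ i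
      = ∑ i ∈ Finset.range a, (∑ j ∈ Finset.range (i + 1), q ^ j) * q ^ i :=
    Finset.sum_congr rfl fun i hi => by
      rw [min_eq_left (le_of_lt (Finset.mem_range.mp hi))]
  have hterm2 : ∑ i ∈ Finset.Ico a (c + 1), (∑ j ∈ Finset.range (min i a + 1), q ^ j) * q ^ i
      = ∑ i ∈ Finset.Ico a (c + 1), (∑ j ∈ Finset.range (a + 1), q ^ j) * q ^ i :=
    Finset.sum_congr rfl fun i hi => by
      rw [min_eq_right (Finset.mem_Ico.mp hi).1]
  rw [hterm1, hterm2]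
  rw [← Finset.mul_sum]
  have hS1 : (∑ i ∈ Finset.range a, (∑ j ∈ Finset.range (i + 1), q ^ j) * q ^ i) * (q - 1)
      = q * (∑ i ∈ Finset.range a, (q ^ 2) ^ i) - ∑ i ∈ Finset.range a, q ^ i := by
    rw [Finset.sum_mul, Finset.mul_sum, ← Finset.sum_sub_distrib]
    refine Finset.sum_congr rfl fun i _ => ?_
    calc (∑ j ∈ Finset.range (i + 1), q ^ j) * q ^ i * (q - 1)
        = ((∑ j ∈ Finset.range (i + 1), q ^ j) * (q - 1)) * q ^ i := by ring
      _ = (q ^ (i + 1) - 1) * q ^ i := by rw [geom_sum_mul]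
      _ = q * (q ^ 2) ^ i - q ^ i := by
          rw [show ((q : ℤ) ^ 2) ^ i = q ^ i * q ^ i by rw [sq, mul_pow], pow_succ]
          ring
  have hG2 : (∑ i ∈ Finset.range a, ((q : ℤ) ^ 2) ^ i) * (q ^ 2 - 1) = q ^ (2 * a) - 1 := by
    rw [geom_sum_mul, ← pow_mul]
  have hG1 : (∑ i ∈ Finset.range a, (q : ℤ) ^ i) * (q - 1) = q ^ a - 1 := geom_sum_mul q a
  have hT : (∑ j ∈ Finset.range (a + 1), (q : ℤ) ^ j) * (q - 1) = q ^ (a + 1) - 1 :=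
    geom_sum_mul q (a + 1)
  have hI : (∑ i ∈ Finset.Ico a (c + 1), (q : ℤ) ^ i) * (q - 1) = q ^ (c + 1) - q ^ a := by
    have h0 := Finset.sum_range_add_sum_Ico (fun i => (q : ℤ) ^ i) (show a ≤ c + 1 by omega)
    have h1 : (∑ i ∈ Finset.Ico a (c + 1), (q : ℤ) ^ i)
        = (∑ i ∈ Finset.range (c + 1), q ^ i) - ∑ i ∈ Finset.range a, q ^ i := by
      rw [← h0]
      ring
    rw [h1, sub_mul, geom_sum_mul, geom_sum_mul]
    ring
  have hexp1 : (q : ℤ) ^ (a + c + 3) = q ^ a * q ^ c * q ^ 3 := by rw [pow_add, pow_add]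
  have hexp2 : (q : ℤ) ^ (a + c + 2) = q ^ a * q ^ c * q ^ 2 := by rw [pow_add, pow_add]
  have hexp3 : (q : ℤ) ^ (2 * a + 2) = q ^ (2 * a) * q ^ 2 := by rw [pow_add]
  have hexp4 : (q : ℤ) ^ (c + 2) = q ^ c * q ^ 2 := by rw [pow_add]
  have hexp5 : (q : ℤ) ^ (c + 1) = q ^ c * q := by rw [pow_add, pow_one]
  have hexp6 : (q : ℤ) ^ (a + 1) = q ^ a * q := by rw [pow_add, pow_one]
  have hexp7 : (q : ℤ) ^ (2 * a) = q ^ a * q ^ a := by rw [two_mul, pow_add]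
  rw [hexp1, hexp2, hexp3, hexp4, hexp5, hexp7] at *
  linear_combination (q ^ 2 - 1) * hS1 + q * hG2 - (q + 1) * hG1
    + (q + 1) * (q - 1) * (∑ j ∈ Finset.range (a + 1), (q : ℤ) ^ j) * hI
    + (q + 1) * (q ^ c * q - q ^ a) * hT


lemma inner_reindex (p a₁ a₂ i : ℕ) (hi : i ≤ a₂) :
    (∑ k ∈ Finset.range (a₁ + 1), if a₁ + a₂ - i ≤ k + a₂ then p ^ (a₁ - k) else 0)
      = ∑ j ∈ Finset.range (min i a₁ + 1), p ^ j := by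
  have h1 : (∑ k ∈ Finset.range (a₁ + 1), if a₁ + a₂ - i ≤ k + a₂ then p ^ (a₁ - k) else 0)
      = ∑ k ∈ Finset.range (a₁ + 1),
          if a₁ + a₂ - i ≤ (a₁ + 1 - 1 - k) + a₂ then p ^ (a₁ - (a₁ + 1 - 1 - k)) else 0 :=
    (Finset.sum_range_reflect _ _).symm
  rw [h1]
  have h2 : ∀ k ∈ Finset.range (a₁ + 1),
      (if a₁ + a₂ - i ≤ (a₁ + 1 - 1 - k) + a₂ then p ^ (a₁ - (a₁ + 1 - 1 - k)) else 0)
        = if k ≤ min i a₁ then p ^ k else 0 := by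
    intro k hk
    have hk' : k ≤ a₁ := by
      have := Finset.mem_range.mp hk
      omega
    have he : a₁ - (a₁ + 1 - 1 - k) = k := by omega
    have hcond : (a₁ + a₂ - i ≤ (a₁ + 1 - 1 - k) + a₂) ↔ k ≤ min i a₁ := by omega
    rw [he]
    by_cases h : k ≤ min i a₁
    · rw [if_pos (hcond.mpr h), if_pos h]
    · rw [if_neg (fun hc => h (hcond.mp hc)), if_neg h]
  rw [Finset.sum_congr rfl h2]
  rw [← Finset.sum_subset (Finset.range_subset_range.mpr (show min i a₁ + 1 ≤ a₁ + 1 by omega))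
    (fun j _ hj => by
      rw [if_neg]
      intro hc
      exact hj (Finset.mem_range.mpr (by omega)))]
  refine Finset.sum_congr rfl fun j hj => ?_
  rw [if_pos (by have := Finset.mem_range.mp hj; omega)]

lemma reindex (p a₁ a₂ a₃ b : ℕ) (hb1 : a₁ + a₃ ≤ b) (hb2 : b ≤ a₂ + a₃) (h23 : a₂ ≤ a₃) :
    (∑ m ∈ Finset.range (a₁ + a₂ + 1), if b ≤ m + a₃
        then (∑ k ∈ Finset.range (a₁ + 1), if m ≤ k + a₂ then p ^ (a₁ - k) else 0)
          * p ^ (a₁ + a₂ - m)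
        else 0)
      = ∑ i ∈ Finset.range ((a₁ + a₂ + a₃ - b) + 1),
          (∑ j ∈ Finset.range (min i a₁ + 1), p ^ j) * p ^ i := by
  have h1 : (∑ m ∈ Finset.range (a₁ + a₂ + 1), if b ≤ m + a₃
        then (∑ k ∈ Finset.range (a₁ + 1), if m ≤ k + a₂ then p ^ (a₁ - k) else 0)
          * p ^ (a₁ + a₂ - m)
        else 0)
      = ∑ i ∈ Finset.range (a₁ + a₂ + 1), if b ≤ (a₁ + a₂ + 1 - 1 - i) + a₃
          then (∑ k ∈ Finset.range (a₁ + 1),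
              if a₁ + a₂ + 1 - 1 - i ≤ k + a₂ then p ^ (a₁ - k) else 0)
            * p ^ (a₁ + a₂ - (a₁ + a₂ + 1 - 1 - i))
          else 0 :=
    (Finset.sum_range_reflect _ _).symm
  rw [h1]
  have h2 : ∀ i ∈ Finset.range (a₁ + a₂ + 1),
      (if b ≤ (a₁ + a₂ + 1 - 1 - i) + a₃
          then (∑ k ∈ Finset.range (a₁ + 1),
              if a₁ + a₂ + 1 - 1 - i ≤ k + a₂ then p ^ (a₁ - k) else 0)
            * p ^ (a₁ + a₂ - (a₁ + a₂ + 1 - 1 - i))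
          else 0)
        = if i ≤ a₁ + a₂ + a₃ - b
            then (∑ j ∈ Finset.range (min i a₁ + 1), p ^ j) * p ^ i else 0 := by
    intro i hi
    have hi' : i ≤ a₁ + a₂ := by
      have := Finset.mem_range.mp hi
      omega
    have hcond : (b ≤ (a₁ + a₂ + 1 - 1 - i) + a₃) ↔ i ≤ a₁ + a₂ + a₃ - b := by omega
    by_cases h : i ≤ a₁ + a₂ + a₃ - b
    · rw [if_pos (hcond.mpr h), if_pos h]
      have hii : i ≤ a₂ := by omega
      have he1 : a₁ + a₂ + 1 - 1 - i = a₁ + a₂ - i := by omega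
      have he2 : a₁ + a₂ - (a₁ + a₂ + 1 - 1 - i) = i := by omega
      rw [he2, he1, inner_reindex p a₁ a₂ i hii]
    · rw [if_neg (fun hc => h (hcond.mp hc)), if_neg h]
  rw [Finset.sum_congr rfl h2]
  rw [← Finset.sum_subset
    (Finset.range_subset_range.mpr (show a₁ + a₂ + a₃ - b + 1 ≤ a₁ + a₂ + 1 by omega))
    (fun i _ hij => by
      rw [if_neg]
      intro hc
      exact hij (Finset.mem_range.mpr (by omega)))]
  refine Finset.sum_congr rfl fun i hi => ?_
  rw [if_pos (by have := Finset.mem_range.mp hi; omega)]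

end Rank3Case9

/-- Case 9 (`a₁ + a₃ ≤ b ≤ a₂ + a₃`) of the rank-3 subgroup counting theorem. -/
theorem rank3_case9 (p a₁ a₂ a₃ b : ℕ) (hp : p.Prime)
    (ha₁ : 1 ≤ a₁) (h12 : a₁ ≤ a₂) (h23 : a₂ ≤ a₃)
    (hb1 : a₁ + a₃ ≤ b) (hb2 : b ≤ a₂ + a₃) :
    (Nat.card {H : AddSubgroup (ZMod (p ^ a₁) × ZMod (p ^ a₂) × ZMod (p ^ a₃)) //
        Nat.card H = p ^ b} : ℤ) * (((p : ℤ) - 1) * ((p : ℤ) ^ 2 - 1)) =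
      (p : ℤ) ^ (2 * a₁ + a₂ + a₃ - b + 3) + (p : ℤ) ^ (2 * a₁ + a₂ + a₃ - b + 2)
        - (p : ℤ) ^ (2 * a₁ + 2) - (p : ℤ) ^ (a₁ + a₂ + a₃ - b + 2)
        - (p : ℤ) ^ (a₁ + a₂ + a₃ - b + 1) + 1 := by
  classical
  haveI : NeZero (p ^ a₁) := ⟨pow_ne_zero _ hp.pos.ne'⟩
  haveI : NeZero (p ^ a₂) := ⟨pow_ne_zero _ hp.pos.ne'⟩
  haveI : NeZero (p ^ a₃) := ⟨pow_ne_zero _ hp.pos.ne'⟩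
  letI : Fintype (AddSubgroup (ZMod (p ^ a₁) × ZMod (p ^ a₂))) := Fintype.ofFinite _
  letI : Fintype (AddSubgroup (ZMod (p ^ a₁))) := Fintype.ofFinite _
  rw [Rank3Case9.card_subgroup_transport
    (AddEquiv.prodAssoc.symm :
      (ZMod (p ^ a₁) × ZMod (p ^ a₂) × ZMod (p ^ a₃)) ≃+
        (ZMod (p ^ a₁) × ZMod (p ^ a₂)) × ZMod (p ^ a₃)) (p ^ b)]
  -- Step 1: count via the fibration over subgroups of the rank-2 factor
  have hcardX : Nat.card (ZMod (p ^ a₁) × ZMod (p ^ a₂)) = p ^ (a₁ + a₂) := by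
    rw [Nat.card_prod, Nat.card_zmod, Nat.card_zmod, pow_add]
  have hcard1 : Nat.card (ZMod (p ^ a₁)) = p ^ a₁ := Nat.card_zmod _
  have hmain := Rank3Case9.count_prod_cyclic p hp (ZMod (p ^ a₁) × ZMod (p ^ a₂)) a₃ b
    (by rw [hcardX]; exact pow_dvd_pow p (by omega))
  have hmain2 : Nat.card {H : AddSubgroup ((ZMod (p ^ a₁) × ZMod (p ^ a₂)) × ZMod (p ^ a₃)) //
        Nat.card H = p ^ b}
      = ∑ m ∈ Finset.range (a₁ + a₂ + 1),
          (Finset.univ.filter fun K : AddSubgroup (ZMod (p ^ a₁) × ZMod (p ^ a₂)) =>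
            Nat.card K = p ^ m).card
          * (if p ^ m ∣ p ^ b ∧ p ^ b ≤ p ^ m * p ^ a₃
              then Nat.card (ZMod (p ^ a₁) × ZMod (p ^ a₂)) / p ^ m else 0) := by
    rw [hmain]
    exact Rank3Case9.sum_subgroup_by_card p (a₁ + a₂) hp _ hcardX
      (fun cc => if cc ∣ p ^ b ∧ p ^ b ≤ cc * p ^ a₃
        then Nat.card (ZMod (p ^ a₁) × ZMod (p ^ a₂)) / cc else 0)
  -- Step 2: evaluate the number of subgroups of given order of the rank-2 factor
  have hNm : ∀ m, m ≤ a₁ + a₂ → b ≤ m + a₃ →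
      (Finset.univ.filter fun K : AddSubgroup (ZMod (p ^ a₁) × ZMod (p ^ a₂)) =>
        Nat.card K = p ^ m).card
      = ∑ k ∈ Finset.range (a₁ + 1), if m ≤ k + a₂ then p ^ (a₁ - k) else 0 := by
    intro m hm hbm
    have ha₁m : a₁ ≤ m := by omega
    have h0 : (Finset.univ.filter fun K : AddSubgroup (ZMod (p ^ a₁) × ZMod (p ^ a₂)) =>
          Nat.card K = p ^ m).card
        = Nat.card {K : AddSubgroup (ZMod (p ^ a₁) × ZMod (p ^ a₂)) // Nat.card K = p ^ m} := by
      rw [Nat.card_eq_fintype_card, Fintype.card_subtype]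
    rw [h0]
    have h1 := Rank3Case9.count_prod_cyclic p hp (ZMod (p ^ a₁)) a₂ m
      (by rw [hcard1]; exact pow_dvd_pow p ha₁m)
    rw [h1]
    have h2 : (∑ K₁ : AddSubgroup (ZMod (p ^ a₁)),
          if Nat.card K₁ ∣ p ^ m ∧ p ^ m ≤ Nat.card K₁ * p ^ a₂
            then Nat.card (ZMod (p ^ a₁)) / Nat.card K₁ else 0)
        = ∑ k ∈ Finset.range (a₁ + 1),
            (Finset.univ.filter fun K : AddSubgroup (ZMod (p ^ a₁)) =>
              Nat.card K = p ^ k).card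
            * (if p ^ k ∣ p ^ m ∧ p ^ m ≤ p ^ k * p ^ a₂
                then Nat.card (ZMod (p ^ a₁)) / p ^ k else 0) :=
      Rank3Case9.sum_subgroup_by_card p a₁ hp _ hcard1
        (fun cc => if cc ∣ p ^ m ∧ p ^ m ≤ cc * p ^ a₂
          then Nat.card (ZMod (p ^ a₁)) / cc else 0)
    rw [h2]
    refine Finset.sum_congr rfl fun k hk => ?_
    have hk' : k ≤ a₁ := by
      have := Finset.mem_range.mp hk
      omega
    rw [Rank3Case9.zmod_filter_card_eq_one p a₁ k hp hk', one_mul]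
    by_cases hcase : m ≤ k + a₂
    · have hc2 : p ^ m ≤ p ^ k * p ^ a₂ := by
        rw [← pow_add]
        exact Nat.pow_le_pow_right hp.pos (by omega)
      rw [if_pos ⟨pow_dvd_pow p (by omega), hc2⟩, if_pos hcase, hcard1,
        Nat.pow_div hk' hp.pos]
    · rw [if_neg, if_neg hcase]
      rintro ⟨-, hle⟩
      rw [← pow_add] at hle
      exact hcase (by have := (Nat.pow_le_pow_iff_right hp.one_lt).mp hle; omega)
  -- Step 3: simplify each term
  have hstep : ∀ m ∈ Finset.range (a₁ + a₂ + 1),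
      (Finset.univ.filter fun K : AddSubgroup (ZMod (p ^ a₁) × ZMod (p ^ a₂)) =>
        Nat.card K = p ^ m).card
        * (if p ^ m ∣ p ^ b ∧ p ^ b ≤ p ^ m * p ^ a₃
            then Nat.card (ZMod (p ^ a₁) × ZMod (p ^ a₂)) / p ^ m else 0)
      = if b ≤ m + a₃
          then (∑ k ∈ Finset.range (a₁ + 1), if m ≤ k + a₂ then p ^ (a₁ - k) else 0)
            * p ^ (a₁ + a₂ - m)
          else 0 := by
    intro m hm
    have hm' : m ≤ a₁ + a₂ := by
      have := Finset.mem_range.mp hm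
      omega
    by_cases hbm : b ≤ m + a₃
    · rw [if_pos hbm, hNm m hm' hbm]
      congr 1
      have hc2 : p ^ b ≤ p ^ m * p ^ a₃ := by
        rw [← pow_add]
        exact Nat.pow_le_pow_right hp.pos (by omega)
      rw [if_pos ⟨pow_dvd_pow p (by omega), hc2⟩, hcardX, Nat.pow_div hm' hp.pos]
    · rw [if_neg hbm, if_neg, mul_zero]
      rintro ⟨-, hle⟩
      rw [← pow_add] at hle
      exact hbm (by have := (Nat.pow_le_pow_iff_right hp.one_lt).mp hle; omega)
  have hval := hmain2.trans ((Finset.sum_congr rfl hstep).trans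
    (Rank3Case9.reindex p a₁ a₂ a₃ b hb1 hb2 h23))
  rw [hval]
  push_cast
  rw [Rank3Case9.arith (p : ℤ) a₁ (a₁ + a₂ + a₃ - b) (by omega)]
  have e1 : a₁ + (a₁ + a₂ + a₃ - b) + 3 = 2 * a₁ + a₂ + a₃ - b + 3 := by omega
  have e2 : a₁ + (a₁ + a₂ + a₃ - b) + 2 = 2 * a₁ + a₂ + a₃ - b + 2 := by omega
  rw [e1, e2]
end

section
/- Let p be a prime and let a_1, a_2 be integers with 1 ≤ a_1 ≤ a_2. For every integer b with 0 ≤ b ≤ a_1 + a_2, the number h_b of subgroups of order p^b in ℤ/p^{a_1} × ℤ/p^{a_2} satisfies: if 0 ≤ b ≤ a_1 then h_b = (p^{b+1} - 1)/(p - 1); if a_1 ≤ b ≤ a_2 then h_b = (p^{a_1+1} - 1)/(p - 1); and if a_2 ≤ b ≤ a_1 + a_2 then h_b = (p^{a_1+a_2-b+1} - 1)/(p - 1). -/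
open AddSubgroup Finset

lemma zsmulCast {n : ℕ} (x w : ℤ) : x • ((w : ZMod n)) = ((w * x : ℤ) : ZMod n) := by
  rw [zsmul_eq_mul]; push_cast; ring

lemma intEqOfDvd {d x y : ℤ} (h : d ∣ x - y) (hx : 0 ≤ x) (hx' : x < d)
    (hy : 0 ≤ y) (hy' : y < d) : x = y := by
  have := Int.eq_zero_of_abs_lt_dvd h (by rw [abs_sub_lt_iff]; omega)
  omega

lemma powDvdCancel {p e k : ℕ} (hp : 0 < p) (hk : k ≤ e) {x : ℤ}
    (h : (p:ℤ)^e ∣ x * (p:ℤ)^k) : (p:ℤ)^(e-k) ∣ x := by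
  have hpk : ((p:ℤ))^k ≠ 0 := pow_ne_zero _ (by exact_mod_cast hp.ne')
  have h2 : (p:ℤ)^(e-k) * (p:ℤ)^k ∣ x * (p:ℤ)^k := by
    rw [← pow_add]
    rwa [Nat.sub_add_cancel hk]
  exact (mul_dvd_mul_iff_right hpk).mp h2

lemma castEqOfDvd {n : ℕ} {A B : ℤ} (h : (n:ℤ) ∣ A - B) :
    ((A : ZMod n)) = ((B : ZMod n)) := by
  have := (ZMod.intCast_zmod_eq_zero_iff_dvd (A - B) n).mpr h
  rw [Int.cast_sub] at this
  exact sub_eq_zero.mp this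

lemma dvdOfCastEq {n : ℕ} {A B : ℤ} (h : ((A : ZMod n)) = ((B : ZMod n))) :
    (n:ℤ) ∣ A - B :=
  (ZMod.intCast_zmod_eq_zero_iff_dvd (A - B) n).mp (by rw [Int.cast_sub, h, sub_self])

def Hsub (p a₁ a₂ α β : ℕ) (w : ℤ) : AddSubgroup (ZMod (p^a₁) × ZMod (p^a₂)) :=
  AddSubgroup.closure {((((p:ℤ)^α : ℤ) : ZMod (p^a₁)), ((w : ℤ) : ZMod (p^a₂))),
    ((0 : ZMod (p^a₁)), (((p:ℤ)^β : ℤ) : ZMod (p^a₂)))}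

lemma mem_Hsub {p a₁ a₂ α β : ℕ} {w : ℤ} {z : ZMod (p^a₁) × ZMod (p^a₂)} :
    z ∈ Hsub p a₁ a₂ α β w ↔ ∃ x y : ℤ,
      z = (((((p:ℤ)^α * x : ℤ)) : ZMod (p^a₁)), (((w * x + (p:ℤ)^β * y : ℤ)) : ZMod (p^a₂))) := by
  rw [Hsub, AddSubgroup.mem_closure_pair]
  have key : ∀ x y : ℤ,
      x • (((((p:ℤ)^α : ℤ)) : ZMod (p^a₁)), ((w : ℤ) : ZMod (p^a₂))) +
      y • ((0 : ZMod (p^a₁)), (((p:ℤ)^β : ℤ) : ZMod (p^a₂))) =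
      (((((p:ℤ)^α * x : ℤ)) : ZMod (p^a₁)), (((w * x + (p:ℤ)^β * y : ℤ)) : ZMod (p^a₂))) := by
    intro x y
    rw [Prod.smul_mk, Prod.smul_mk, Prod.mk_add_mk, zsmulCast, zsmulCast, zsmulCast, smul_zero]
    rw [Prod.mk.injEq]
    constructor <;> push_cast <;> ring
  constructor
  · rintro ⟨m, n, rfl⟩
    exact ⟨m, n, key m n⟩
  · rintro ⟨m, n, hz⟩
    exact ⟨m, n, (key m n).trans hz.symm⟩

lemma fstmap_Hsub (p a₁ a₂ α β : ℕ) (w : ℤ) :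
    (Hsub p a₁ a₂ α β w).map (AddMonoidHom.fst _ _) =
      zmultiples ((((p:ℤ)^α : ℤ)) : ZMod (p^a₁)) := by
  rw [Hsub, AddMonoidHom.map_closure, Set.image_insert_eq, Set.image_singleton]
  simp only [AddMonoidHom.coe_fst]
  rw [zmultiples_eq_closure]
  apply le_antisymm
  · rw [closure_le]
    rintro x (rfl | rfl)
    · exact subset_closure rfl
    · exact zero_mem _
  · exact closure_mono (by simp)

lemma card_zmult {p : ℕ} (hp : p.Prime) {a α : ℕ} (hα : α ≤ a) :
    Nat.card (zmultiples ((((p:ℤ)^α : ℤ)) : ZMod (p^a))) = p^(a-α) := by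
  haveI : NeZero (p^a) := ⟨(pow_pos hp.pos a).ne'⟩
  rw [Nat.card_zmultiples]
  have h1 : ((((p:ℤ)^α : ℤ)) : ZMod (p^a)) = ((p^α : ℕ) : ZMod (p^a)) := by push_cast; ring
  rw [h1, ZMod.addOrderOf_coe _ (pow_pos hp.pos a).ne']
  rw [Nat.gcd_eq_right (pow_dvd_pow p hα), Nat.pow_div hα hp.pos]

lemma g1_mem_Hsub {p : ℕ} (a₁ a₂ : ℕ) {α β : ℕ} {w w' : ℤ}
    (h : (p:ℤ)^β ∣ w - w') :
    (((((p:ℤ)^α : ℤ)) : ZMod (p^a₁)), ((w : ℤ) : ZMod (p^a₂))) ∈ Hsub p a₁ a₂ α β w' := by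
  obtain ⟨k, hk⟩ := h
  rw [mem_Hsub]
  refine ⟨1, k, ?_⟩
  rw [Prod.mk.injEq]
  constructor
  · norm_num
  · congr 1
    linarith

lemma g2_mem_Hsub {p : ℕ} (a₁ a₂ : ℕ) {α β : ℕ} {w : ℤ} :
    ((0 : ZMod (p^a₁)), (((p:ℤ)^β : ℤ) : ZMod (p^a₂))) ∈ Hsub p a₁ a₂ α β w := by
  rw [mem_Hsub]
  exact ⟨0, 1, by norm_num⟩

lemma Hsub_congr {p : ℕ} (a₁ a₂ : ℕ) {α β : ℕ} {w w' : ℤ}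
    (h : (p:ℤ)^β ∣ w - w') : Hsub p a₁ a₂ α β w = Hsub p a₁ a₂ α β w' := by
  apply le_antisymm
  · rw [Hsub, closure_le]
    rintro x (rfl | rfl)
    · exact g1_mem_Hsub a₁ a₂ h
    · exact g2_mem_Hsub a₁ a₂
  · rw [Hsub, closure_le]
    rintro x (rfl | rfl)
    · exact g1_mem_Hsub a₁ a₂ (by obtain ⟨k, hk⟩ := h; exact ⟨-k, by linarith⟩)
    · exact g2_mem_Hsub a₁ a₂

lemma card_Hsub {p : ℕ} (hp : p.Prime) {a₁ a₂ α β : ℕ} (hα : α ≤ a₁) (hβ : β ≤ a₂) {w s : ℤ}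
    (hws : ((p:ℤ))^a₂ ∣ (p:ℤ)^(a₁-α) * w - (p:ℤ)^β * s) :
    Nat.card (Hsub p a₁ a₂ α β w) = p ^ ((a₁ - α) + (a₂ - β)) := by
  haveI : NeZero (p^a₁) := ⟨(pow_pos hp.pos a₁).ne'⟩
  haveI : NeZero (p^a₂) := ⟨(pow_pos hp.pos a₂).ne'⟩
  set i := a₁ - α with hi
  set j := a₂ - β with hj
  have hp0 : (0:ℤ) < (p:ℤ) := by exact_mod_cast hp.pos
  have hia : (p:ℤ)^i * (p:ℤ)^α = (p:ℤ)^a₁ := by rw [← pow_add]; congr 1; omega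
  have hjb : (p:ℤ)^j * (p:ℤ)^β = (p:ℤ)^a₂ := by rw [← pow_add]; congr 1; omega
  have hpi : (0:ℤ) < (p:ℤ)^i := pow_pos hp0 i
  have hpj : (0:ℤ) < (p:ℤ)^j := pow_pos hp0 j
  have hci : ((p^i : ℕ) : ℤ) = (p:ℤ)^i := by push_cast; ring
  have hcj : ((p^j : ℕ) : ℤ) = (p:ℤ)^j := by push_cast; ring
  set f : Fin (p^i) × Fin (p^j) → ZMod (p^a₁) × ZMod (p^a₂) :=
    fun z => (((((p:ℤ)^α * ((z.1 : ℕ) : ℤ) : ℤ)) : ZMod (p^a₁)),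
      (((w * ((z.1 : ℕ) : ℤ) + (p:ℤ)^β * ((z.2 : ℕ) : ℤ) : ℤ)) : ZMod (p^a₂))) with hf
  have hinj : Function.Injective f := by
    rintro ⟨x, y⟩ ⟨x', y'⟩ h
    rw [hf, Prod.mk.injEq] at h
    obtain ⟨h1, h2⟩ := h
    rw [ZMod.intCast_eq_intCast_iff] at h1 h2
    have d1 : (p:ℤ)^a₁ ∣ ((x' : ℕ) - (x : ℕ) : ℤ) * (p:ℤ)^α := by
      have := Int.ModEq.dvd h1
      push_cast at this ⊢
      convert this using 1
      ring
    rw [← hia] at d1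
    have d1' : (p:ℤ)^i ∣ ((x' : ℕ) - (x : ℕ) : ℤ) := by
      have := powDvdCancel (e := i + α) hp.pos (Nat.le_add_left α i)
        (x := ((x' : ℕ) - (x : ℕ) : ℤ)) (by rwa [pow_add])
      simpa using this
    have hxx : ((x' : ℕ) : ℤ) = ((x : ℕ) : ℤ) := by
      refine intEqOfDvd (d := (p:ℤ)^i) d1' ?_ ?_ ?_ ?_
      · positivity
      · rw [← hci]; exact_mod_cast x'.isLt
      · positivity
      · rw [← hci]; exact_mod_cast x.isLt
    have hxx' : x = x' := by
      ext
      exact_mod_cast hxx.symm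
    subst hxx'
    have d2 : (p:ℤ)^a₂ ∣ ((y' : ℕ) - (y : ℕ) : ℤ) * (p:ℤ)^β := by
      have := Int.ModEq.dvd h2
      push_cast at this ⊢
      convert this using 1
      ring
    rw [← hjb] at d2
    have d2' : (p:ℤ)^j ∣ ((y' : ℕ) - (y : ℕ) : ℤ) := by
      have := powDvdCancel (e := j + β) hp.pos (Nat.le_add_left β j)
        (x := ((y' : ℕ) - (y : ℕ) : ℤ)) (by rwa [pow_add])
      simpa using this
    have hyy : ((y' : ℕ) : ℤ) = ((y : ℕ) : ℤ) := by
      refine intEqOfDvd (d := (p:ℤ)^j) d2' ?_ ?_ ?_ ?_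
      · positivity
      · rw [← hcj]; exact_mod_cast y'.isLt
      · positivity
      · rw [← hcj]; exact_mod_cast y.isLt
    have hyy' : y = y' := by
      ext
      exact_mod_cast hyy.symm
    rw [hyy']
  have hrange : Set.range f = (Hsub p a₁ a₂ α β w : Set _) := by
    ext z
    constructor
    · rintro ⟨⟨x, y⟩, rfl⟩
      rw [SetLike.mem_coe, mem_Hsub]
      exact ⟨((x : ℕ) : ℤ), ((y : ℕ) : ℤ), rfl⟩
    · intro hz
      rw [SetLike.mem_coe, mem_Hsub] at hz
      obtain ⟨x, y, rfl⟩ := hz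
      obtain ⟨T, hT⟩ := hws
      set q := x / (p:ℤ)^i with hq
      set r := x % (p:ℤ)^i with hr
      have hx : (p:ℤ)^i * q + r = x := Int.mul_ediv_add_emod x ((p:ℤ)^i)
      have hr0 : 0 ≤ r := Int.emod_nonneg x hpi.ne'
      have hr1 : r < (p:ℤ)^i := Int.emod_lt_of_pos x hpi
      set y2 := y + q * s with hy2
      set q2 := y2 / (p:ℤ)^j with hq2
      set r2 := y2 % (p:ℤ)^j with hr2
      have hy : (p:ℤ)^j * q2 + r2 = y2 := Int.mul_ediv_add_emod y2 ((p:ℤ)^j)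
      have hr20 : 0 ≤ r2 := Int.emod_nonneg y2 hpj.ne'
      have hr21 : r2 < (p:ℤ)^j := Int.emod_lt_of_pos y2 hpj
      have hrn : ((r.toNat : ℕ) : ℤ) = r := Int.toNat_of_nonneg hr0
      have hr2n : ((r2.toNat : ℕ) : ℤ) = r2 := Int.toNat_of_nonneg hr20
      have hy'' : (p:ℤ)^j * q2 + r2 = y + q * s := hy.trans hy2
      refine ⟨(⟨r.toNat, ?_⟩, ⟨r2.toNat, ?_⟩), ?_⟩
      · omega
      · omega
      · rw [hf, Prod.mk.injEq]
        constructor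
        · refine castEqOfDvd ⟨-q, ?_⟩
          push_cast [hrn]
          linear_combination (p:ℤ)^α * hx - q * hia
        · refine castEqOfDvd ⟨-(q * T + q2), ?_⟩
          push_cast [hrn, hr2n]
          linear_combination w * hx + (p:ℤ)^β * hy'' - q * hT - q2 * hjb
  have hcard : Nat.card (Hsub p a₁ a₂ α β w) = Nat.card (Fin (p^i) × Fin (p^j)) := by
    rw [← Nat.card_range_of_injective hinj]
    exact Nat.card_congr (Equiv.setCongr hrange.symm)
  rw [hcard, Nat.card_eq_fintype_card, Fintype.card_prod, Fintype.card_fin, Fintype.card_fin,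
    ← pow_add]

lemma zmodClassify {p : ℕ} (hp : p.Prime) (a : ℕ) (S : AddSubgroup (ZMod (p^a))) :
    ∃ α ≤ a, S = zmultiples ((((p:ℤ)^α : ℤ)) : ZMod (p^a)) := by
  haveI : NeZero (p^a) := ⟨(pow_pos hp.pos a).ne'⟩
  classical
  have hPa : (((p:ℤ)^a : ℤ) : ZMod (p^a)) ∈ S := by
    have : (((p:ℤ)^a : ℤ) : ZMod (p^a)) = 0 := by
      rw [ZMod.intCast_zmod_eq_zero_iff_dvd]; push_cast; exact dvd_rfl
    rw [this]; exact zero_mem S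
  have hex : ∃ k, (((p:ℤ)^k : ℤ) : ZMod (p^a)) ∈ S := ⟨a, hPa⟩
  set α := Nat.find hex with hα
  have hαa : α ≤ a := Nat.find_min' hex hPa
  have hαS : (((p:ℤ)^α : ℤ) : ZMod (p^a)) ∈ S := Nat.find_spec hex
  refine ⟨α, hαa, le_antisymm ?_ (by rwa [zmultiples_le])⟩
  intro x hx
  rcases eq_or_ne x 0 with rfl | hx0
  · exact zero_mem _
  -- x = cast of its val
  set n := x.val with hn
  have hn0 : n ≠ 0 := fun h => hx0 ((ZMod.val_eq_zero x).mp h)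
  have hxn : ((n : ℤ) : ZMod (p^a)) = x := by
    rw [Int.cast_natCast]; exact ZMod.natCast_rightInverse x
  -- p-adic valuation decomposition of n
  set v := n.factorization p with hv
  set t := n / p ^ v with ht
  have hnt : p ^ v * t = n := Nat.ordProj_mul_ordCompl_eq_self n p
  have hpt : ¬ p ∣ t := Nat.not_dvd_ordCompl hp hn0
  have hcop : IsCoprime (t : ℤ) ((p:ℤ)^a) := by
    apply IsCoprime.pow_right
    rw [Int.isCoprime_iff_gcd_eq_one, Int.gcd_natCast_natCast]
    exact Nat.coprime_comm.mp (hp.coprime_iff_not_dvd.mpr hpt)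
  obtain ⟨u, u', huv⟩ := hcop
  -- p^v ∈ S
  have hpvS : (((p:ℤ)^v : ℤ) : ZMod (p^a)) ∈ S := by
    have : u • x ∈ S := zsmul_mem hx u
    have hnt' : ((p:ℤ))^v * (t:ℤ) = (n:ℤ) := by exact_mod_cast hnt
    have he : u • x = (((p:ℤ)^v : ℤ) : ZMod (p^a)) := by
      rw [← hxn, zsmulCast]
      apply (ZMod.intCast_eq_intCast_iff _ _ _).mpr
      refine Int.modEq_iff_dvd.mpr ⟨u' * (p:ℤ)^v, ?_⟩
      push_cast
      linear_combination u * hnt' - ((p:ℤ))^v * huv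
    rwa [he] at this
  have hvn : p ^ v ∣ n := ⟨t, hnt.symm⟩
  have hva : v < a := by
    have h1 : p ^ v ≤ n := Nat.le_of_dvd (Nat.pos_of_ne_zero hn0) hvn
    have h2 : n < p ^ a := ZMod.val_lt x
    exact (Nat.pow_lt_pow_iff_right hp.one_lt).mp (lt_of_le_of_lt h1 h2)
  have hαv : α ≤ v := Nat.find_min' hex hpvS
  refine mem_zmultiples_iff.mpr ⟨(p:ℤ)^(v-α) * (t:ℤ), ?_⟩
  rw [zsmulCast, ← hxn]
  congr 1
  have hnt'' : ((p:ℤ))^v * (t:ℤ) = (n:ℤ) := by exact_mod_cast hnt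
  rw [← hnt'']
  rw [← mul_assoc, ← pow_add]
  congr 2
  omega


lemma recover_c {p : ℕ} (hp : p.Prime) {a₁ a₂ i β e : ℕ} (hi : i ≤ a₁) (hβ : β ≤ a₂)
    (hei : e ≤ i) (heb : e ≤ β) {c c' : ℕ} (hc : c < p^e) (hc' : c' < p^e)
    (h : Hsub p a₁ a₂ (a₁ - i) β ((c:ℤ) * (p:ℤ)^(β - e))
       = Hsub p a₁ a₂ (a₁ - i) β ((c':ℤ) * (p:ℤ)^(β - e))) :
    c = c' := by
  have hg1 : (((((p:ℤ)^(a₁ - i) : ℤ)) : ZMod (p^a₁)),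
      (((c:ℤ) * (p:ℤ)^(β - e) : ℤ) : ZMod (p^a₂))) ∈
      Hsub p a₁ a₂ (a₁ - i) β ((c':ℤ) * (p:ℤ)^(β - e)) := by
    rw [← h]
    exact g1_mem_Hsub a₁ a₂ (by simp)
  rw [mem_Hsub] at hg1
  obtain ⟨x, y, hxy⟩ := hg1
  rw [Prod.mk.injEq] at hxy
  obtain ⟨hfst, hsnd⟩ := hxy
  have d1 : (p:ℤ)^a₁ ∣ ((1:ℤ) - x) * (p:ℤ)^(a₁ - i) := by
    have := dvdOfCastEq hfst
    push_cast at this ⊢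
    convert this using 1
    ring
  have d1' : (p:ℤ)^i ∣ (1:ℤ) - x := by
    have := powDvdCancel (e := a₁) hp.pos (Nat.sub_le a₁ i) d1
    rwa [show a₁ - (a₁ - i) = i from by omega] at this
  obtain ⟨k, hk⟩ := d1'
  obtain ⟨l, hl⟩ := dvdOfCastEq hsnd
  push_cast at hl
  have hb1 : (p:ℤ)^(a₂-β) * (p:ℤ)^β = (p:ℤ)^a₂ := by rw [← pow_add]; congr 1; omega
  have hb2 : (p:ℤ)^(i-e) * (p:ℤ)^β = (p:ℤ)^i * (p:ℤ)^(β-e) := by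
    rw [← pow_add, ← pow_add]; congr 1; omega
  have d3 : (p:ℤ)^β ∣ ((c:ℤ) - (c':ℤ)) * (p:ℤ)^(β - e) := by
    refine ⟨(p:ℤ)^(a₂-β) * l + y - (c':ℤ) * k * (p:ℤ)^(i-e), ?_⟩
    linear_combination hl - l * hb1 - ((c':ℤ) * (p:ℤ)^(β-e)) * hk + ((c':ℤ) * k) * hb2
  have d4 : (p:ℤ)^e ∣ (c:ℤ) - (c':ℤ) := by
    have := powDvdCancel (e := β) hp.pos (Nat.sub_le β e) d3
    rwa [show β - (β - e) = e from by omega] at this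
  have hce : ((p^e : ℕ) : ℤ) = (p:ℤ)^e := by push_cast; ring
  have : ((c:ℕ) : ℤ) = ((c':ℕ) : ℤ) := by
    refine intEqOfDvd d4 (by positivity) ?_ (by positivity) ?_
    · rw [← hce]; exact_mod_cast hc
    · rw [← hce]; exact_mod_cast hc'
  exact_mod_cast this

lemma exists_data {p : ℕ} (hp : p.Prime) {a₁ a₂ b : ℕ}
    (H : AddSubgroup (ZMod (p^a₁) × ZMod (p^a₂))) (hH : Nat.card H = p^b) :
    ∃ i c : ℕ, i ≤ a₁ ∧ i ≤ b ∧ b ≤ a₂ + i ∧ c < p ^ (min (a₂ - (b - i)) i) ∧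
      Hsub p a₁ a₂ (a₁ - i) (a₂ - (b - i))
        ((c:ℤ) * (p:ℤ)^((a₂ - (b - i)) - min (a₂ - (b - i)) i)) = H := by
  haveI : NeZero (p^a₁) := ⟨(pow_pos hp.pos a₁).ne'⟩
  haveI : NeZero (p^a₂) := ⟨(pow_pos hp.pos a₂).ne'⟩
  have hp0 : (0:ℤ) < (p:ℤ) := by exact_mod_cast hp.pos
  obtain ⟨α, hα, hS1⟩ := zmodClassify hp a₁ (H.map (AddMonoidHom.fst _ _))
  obtain ⟨β, hβ, hS2⟩ := zmodClassify hp a₂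
    (H.comap (AddMonoidHom.inr (ZMod (p^a₁)) (ZMod (p^a₂))))
  have hpα : (((p:ℤ)^α : ℤ) : ZMod (p^a₁)) ∈ H.map (AddMonoidHom.fst _ _) := by
    rw [hS1]; exact mem_zmultiples _
  obtain ⟨g, hgH, hg1⟩ := AddSubgroup.mem_map.mp hpα
  have hgW : (((g.2.val : ℕ) : ℤ) : ZMod (p^a₂)) = g.2 := by
    push_cast
    exact ZMod.natCast_rightInverse g.2
  set W : ℕ := g.2.val with hWdef
  have hge : g = ((((p:ℤ)^α : ℤ) : ZMod (p^a₁)), (((W:ℤ)) : ZMod (p^a₂))) := by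
    refine Prod.ext ?_ ?_
    · simpa using hg1
    · simpa using hgW.symm
  have hmem0 : ∀ v : ZMod (p^a₂), ((0 : ZMod (p^a₁)), v) ∈ H ↔
      v ∈ zmultiples (((p:ℤ)^β : ℤ) : ZMod (p^a₂)) := by
    intro v
    rw [← hS2, AddSubgroup.mem_comap]
    rfl
  have hHW : Hsub p a₁ a₂ α β (W:ℤ) = H := by
    apply le_antisymm
    · rw [Hsub, closure_le]
      rintro z (rfl | rfl)
      · rw [SetLike.mem_coe, ← hge]; exact hgH
      · rw [SetLike.mem_coe, hmem0]; exact mem_zmultiples _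
    · intro z hz
      have hz1 : z.1 ∈ H.map (AddMonoidHom.fst _ _) :=
        ⟨z, hz, rfl⟩
      rw [hS1, mem_zmultiples_iff] at hz1
      obtain ⟨x, hx⟩ := hz1
      have hz2 : (z - x • g) ∈ H := sub_mem hz (zsmul_mem hgH x)
      have hz2fst : (z - x • g).1 = 0 := by
        have : (x • g).1 = x • g.1 := rfl
        rw [Prod.fst_sub, this, hge]
        simp only
        rw [hx]
        exact sub_self _
      have hz2' : ((0 : ZMod (p^a₁)), (z - x • g).2) ∈ H := by
        have he : ((0 : ZMod (p^a₁)), (z - x • g).2) = z - x • g := by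
          rw [Prod.ext_iff]
          exact ⟨hz2fst.symm, rfl⟩
        rw [he]; exact hz2
      rw [hmem0, mem_zmultiples_iff] at hz2'
      obtain ⟨y, hy⟩ := hz2'
      rw [Hsub, AddSubgroup.mem_closure_pair]
      refine ⟨x, y, ?_⟩
      have hsum : x • ((((p:ℤ)^α : ℤ) : ZMod (p^a₁)), (((W:ℤ)) : ZMod (p^a₂)))
          + y • ((0 : ZMod (p^a₁)), (((p:ℤ)^β : ℤ) : ZMod (p^a₂)))
          = (x • ((((p:ℤ)^α : ℤ)) : ZMod (p^a₁)) + y • (0 : ZMod (p^a₁)),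
             x • (((W:ℤ)) : ZMod (p^a₂)) + y • ((((p:ℤ)^β : ℤ)) : ZMod (p^a₂))) := rfl
      rw [hsum]
      refine Prod.ext ?_ ?_
      · show x • ((((p:ℤ)^α : ℤ)) : ZMod (p^a₁)) + y • (0 : ZMod (p^a₁)) = z.1
        rw [smul_zero, add_zero]
        exact hx
      · show x • (((W:ℤ)) : ZMod (p^a₂)) + y • ((((p:ℤ)^β : ℤ)) : ZMod (p^a₂)) = z.2
        rw [hy]
        have hxg2 : x • (((W:ℤ)) : ZMod (p^a₂)) = x • g.2 := by rw [hge]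
        rw [hxg2]
        have h2 : (z - x • g).2 = z.2 - (x • g).2 := rfl
        have h3 : (x • g).2 = x • g.2 := rfl
        rw [h2, h3]
        ring
  have hcst : ∃ s : ℤ, (p:ℤ)^a₂ ∣ (p:ℤ)^(a₁ - α) * (W:ℤ) - (p:ℤ)^β * s := by
    have h1 : ((p:ℤ)^(a₁ - α)) • g ∈ H := zsmul_mem hgH _
    have h2 : (((p:ℤ)^(a₁ - α)) • g).1 = 0 := by
      rw [hge]
      show ((p:ℤ)^(a₁ - α)) • (((p:ℤ)^α : ℤ) : ZMod (p^a₁)) = 0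
      rw [zsmulCast]
      rw [ZMod.intCast_zmod_eq_zero_iff_dvd]
      push_cast
      rw [← pow_add]
      exact pow_dvd_pow _ (by omega)
    have h3 : ((0 : ZMod (p^a₁)), (((p:ℤ)^(a₁ - α)) • g).2) ∈ H := by
      have he : ((0 : ZMod (p^a₁)), (((p:ℤ)^(a₁ - α)) • g).2) = ((p:ℤ)^(a₁ - α)) • g := by
        rw [Prod.ext_iff]
        exact ⟨h2.symm, rfl⟩
      rw [he]; exact h1
    rw [hmem0, mem_zmultiples_iff] at h3
    obtain ⟨s, hs⟩ := h3
    refine ⟨s, ?_⟩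
    have h4 : (((p:ℤ)^(a₁ - α)) • g).2 = (((W:ℤ) * ((p:ℤ)^(a₁ - α)) : ℤ) : ZMod (p^a₂)) := by
      have h5 : (((p:ℤ)^(a₁ - α)) • g).2 = ((p:ℤ)^(a₁ - α)) • g.2 := rfl
      rw [h5, hge]
      show ((p:ℤ)^(a₁ - α)) • (((W:ℤ) : ℤ) : ZMod (p^a₂)) = _
      rw [zsmulCast]
    rw [h4, zsmulCast] at hs
    have := dvdOfCastEq hs
    push_cast at this
    obtain ⟨l, hl⟩ := this
    exact ⟨-(l), by linear_combination -hl⟩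
  obtain ⟨s, hws⟩ := hcst
  have hcard := card_Hsub hp hα hβ hws
  rw [hHW, hH] at hcard
  have hbeq : b = (a₁ - α) + (a₂ - β) := Nat.pow_right_injective hp.two_le hcard
  have hβ2 : a₂ - (b - (a₁ - α)) = β := by omega
  set e := min β (a₁ - α) with he
  have heβ : e ≤ β := min_le_left _ _
  have hei : e ≤ a₁ - α := min_le_right _ _
  have hWd : (p:ℤ)^(β - e) ∣ ((W:ℤ)) := by
    rcases le_total (a₁ - α) β with hcc | hcc
    · have he' : e = a₁ - α := by omega
      have h2 : (p:ℤ)^β ∣ (p:ℤ)^a₂ := pow_dvd_pow _ hβ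
      have h3 : (p:ℤ)^β ∣ (p:ℤ)^(a₁-α) * (W:ℤ) - (p:ℤ)^β * s := h2.trans hws
      have h1 : (p:ℤ)^β ∣ (p:ℤ)^(a₁-α) * (W:ℤ) := by
        simpa using dvd_add h3 (dvd_mul_right ((p:ℤ)^β) s)
      have h4 := powDvdCancel hp.pos hcc (x := (W:ℤ)) (by rwa [mul_comm] at h1)
      rwa [he']
    · have he' : e = β := by omega
      rw [he']
      simp
  have hc00 : 0 ≤ (W:ℤ) % (p:ℤ)^β := Int.emod_nonneg _ (pow_pos hp0 β).ne'
  have hc01 : (W:ℤ) % (p:ℤ)^β < (p:ℤ)^β := Int.emod_lt_of_pos _ (pow_pos hp0 β)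
  have hWc0 : (p:ℤ)^β ∣ (W:ℤ) - (W:ℤ) % (p:ℤ)^β := by
    refine ⟨(W:ℤ) / (p:ℤ)^β, ?_⟩
    have := Int.mul_ediv_add_emod (W:ℤ) ((p:ℤ)^β)
    linarith
  have hdc0 : (p:ℤ)^(β - e) ∣ (W:ℤ) % (p:ℤ)^β := by
    have h5 : (p:ℤ)^(β-e) ∣ (W:ℤ) - (W:ℤ) % (p:ℤ)^β :=
      (pow_dvd_pow _ (Nat.sub_le β e)).trans hWc0
    have h6 := dvd_sub hWd h5
    simpa using h6
  set c0 := (W:ℤ) % (p:ℤ)^β with hc0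
  set cInt := c0 / (p:ℤ)^(β - e) with hcInt
  have hcint0 : 0 ≤ cInt := Int.ediv_nonneg hc00 (by positivity)
  have hc0eq : cInt * (p:ℤ)^(β - e) = c0 := Int.ediv_mul_cancel hdc0
  have hpe : ((p^e : ℕ):ℤ) = (p:ℤ)^e := by push_cast; ring
  have hclt : cInt < ((p^e : ℕ) : ℤ) := by
    rw [hpe]
    by_contra hcon
    push_neg at hcon
    have h7 : (p:ℤ)^e * (p:ℤ)^(β-e) ≤ cInt * (p:ℤ)^(β-e) :=
      mul_le_mul_of_nonneg_right hcon (by positivity)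
    rw [hc0eq, ← pow_add, show e + (β - e) = β from by omega] at h7
    linarith
  refine ⟨a₁ - α, cInt.toNat, by omega, by omega, by omega, ?_, ?_⟩
  · rw [hβ2, ← he]
    omega
  · rw [hβ2, ← he, show a₁ - (a₁ - α) = α from by omega, ← hHW]
    apply Hsub_congr
    rw [Int.toNat_of_nonneg hcint0, hc0eq, ← neg_sub]
    exact dvd_neg.mpr hWc0

lemma countLemma (p a₁ a₂ b : ℕ) (hp : p.Prime) (ha₁ : 1 ≤ a₁) (h12 : a₁ ≤ a₂)
    (hb : b ≤ a₁ + a₂) :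
    Nat.card {H : AddSubgroup (ZMod (p ^ a₁) × ZMod (p ^ a₂)) // Nat.card H = p ^ b}
      = ∑ i ∈ (range (a₁+1)).filter (fun i => i ≤ b ∧ b ≤ a₂ + i),
          p ^ (min (a₂ - (b - i)) i) := by
  classical
  have hp2 : 2 ≤ p := hp.two_le
  have hp0 : (0:ℤ) < (p:ℤ) := by exact_mod_cast hp.pos
  set eF : ℕ → ℕ := fun i => min (a₂ - (b - i)) i with heF
  set I : Finset ℕ := (range (a₁+1)).filter (fun i => i ≤ b ∧ b ≤ a₂ + i) with hI
  have hmemI : ∀ i : ℕ, i ∈ I ↔ i ≤ a₁ ∧ i ≤ b ∧ b ≤ a₂ + i := by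
    intro i; simp [hI, Nat.lt_succ_iff, and_assoc]
  set wF : ℕ → ℕ → ℤ := fun i c => (c:ℤ) * (p:ℤ)^((a₂ - (b - i)) - eF i) with hwF
  have hFcard : ∀ i : ℕ, i ≤ a₁ → i ≤ b → b ≤ a₂ + i → ∀ c : ℕ,
      Nat.card (Hsub p a₁ a₂ (a₁ - i) (a₂ - (b - i)) (wF i c)) = p ^ b := by
    intro i h1 h2 h3 c
    have hpow : (p:ℤ)^(i + ((a₂-(b-i)) - eF i)) = (p:ℤ)^((a₂-(b-i)) + (i - eF i)) := by
      congr 1; simp only [heF]; omega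
    refine (card_Hsub hp (Nat.sub_le a₁ i) (Nat.sub_le a₂ (b-i))
      (s := (c:ℤ) * (p:ℤ)^(i - eF i)) ⟨0, ?_⟩).trans ?_
    · rw [show a₁ - (a₁ - i) = i from by omega, hwF]
      push_cast
      linear_combination (c:ℤ) * hpow
    · congr 1; omega
  set F : (Σ i : {x // x ∈ I}, Fin (p ^ eF i.1)) →
      {H : AddSubgroup (ZMod (p ^ a₁) × ZMod (p ^ a₂)) // Nat.card H = p ^ b} :=
    fun d => ⟨Hsub p a₁ a₂ (a₁ - d.1.1) (a₂ - (b - d.1.1)) (wF d.1.1 (d.2 : ℕ)),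
      by
        have hi := (hmemI d.1.1).mp d.1.2
        exact hFcard d.1.1 hi.1 hi.2.1 hi.2.2 _⟩ with hF
  have hFinj : Function.Injective F := by
    rintro ⟨⟨i, hiI⟩, c⟩ ⟨⟨i', hiI'⟩, c'⟩ h
    rw [hF, Subtype.mk.injEq] at h
    have hi := (hmemI i).mp hiI
    have hi' := (hmemI i').mp hiI'
    -- recover i
    have hii : i = i' := by
      have h2 := congrArg (fun H => Nat.card (AddSubgroup.map (AddMonoidHom.fst _ _) H)) h
      simp only [fstmap_Hsub] at h2
      rw [card_zmult hp (Nat.sub_le a₁ i), card_zmult hp (Nat.sub_le a₁ i')] at h2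
      have := Nat.pow_right_injective hp2 h2
      omega
    subst hii
    refine Sigma.ext rfl (heq_of_eq ?_)
    have hcc : (c : ℕ) = (c' : ℕ) := by
      refine recover_c hp hi.1 (Nat.sub_le a₂ (b - i)) ?_ ?_ c.isLt c'.isLt h
      · simp only [heF]; omega
      · simp only [heF]; omega
    ext
    exact hcc
  have hFsurj : Function.Surjective F := by
    rintro ⟨H, hH⟩
    obtain ⟨i, c, h1, h2, h3, hc, hEq⟩ := exists_data hp H hH
    refine ⟨⟨⟨i, (hmemI i).mpr ⟨h1, h2, h3⟩⟩, ⟨c, hc⟩⟩, ?_⟩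
    rw [hF]
    exact Subtype.ext hEq
  rw [← Nat.card_eq_of_bijective F ⟨hFinj, hFsurj⟩]
  rw [Nat.card_eq_fintype_card, Fintype.card_sigma]
  simp only [Fintype.card_fin]
  rw [Finset.sum_coe_sort I (fun i => p ^ eF i)]

/-- The number of subgroups of order `p^b` in the rank-2 abelian p-group
`ℤ/p^{a₁} × ℤ/p^{a₂}`, in all three cases. -/
theorem rank2_count (p a₁ a₂ b : ℕ) (hp : p.Prime)
    (ha₁ : 1 ≤ a₁) (h12 : a₁ ≤ a₂) (hb : b ≤ a₁ + a₂) :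
    (b ≤ a₁ →
      (Nat.card {H : AddSubgroup (ZMod (p ^ a₁) × ZMod (p ^ a₂)) //
          Nat.card H = p ^ b} : ℚ) = ((p : ℚ) ^ (b + 1) - 1) / ((p : ℚ) - 1)) ∧
    (a₁ ≤ b → b ≤ a₂ →
      (Nat.card {H : AddSubgroup (ZMod (p ^ a₁) × ZMod (p ^ a₂)) //
          Nat.card H = p ^ b} : ℚ) = ((p : ℚ) ^ (a₁ + 1) - 1) / ((p : ℚ) - 1)) ∧
    (a₂ ≤ b →
      (Nat.card {H : AddSubgroup (ZMod (p ^ a₁) × ZMod (p ^ a₂)) //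
          Nat.card H = p ^ b} : ℚ) = ((p : ℚ) ^ (a₁ + a₂ - b + 1) - 1) / ((p : ℚ) - 1)) := by
  have key := countLemma p a₁ a₂ b hp ha₁ h12 hb
  have hp1 : ((p:ℚ)) ≠ 1 := by
    have := hp.one_lt
    intro h
    rw [show (1:ℚ) = ((1:ℕ):ℚ) from by norm_num, Nat.cast_inj] at h
    omega
  refine ⟨?_, ?_, ?_⟩
  · intro hba₁
    rw [key]
    rw [show (range (a₁+1)).filter (fun i => i ≤ b ∧ b ≤ a₂ + i) = range (b+1) by
      ext i; simp only [mem_filter, mem_range]; omega]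
    push_cast
    have hcong : ∑ x ∈ range (b+1), (p:ℚ) ^ ((a₂ - (b - x)) ⊓ x)
        = ∑ x ∈ range (b+1), (p:ℚ)^x :=
      Finset.sum_congr rfl (fun i hi => by rw [mem_range] at hi; congr 1; omega)
    rw [hcong, geom_sum_eq hp1]
  · intro hab h2
    rw [key]
    rw [show (range (a₁+1)).filter (fun i => i ≤ b ∧ b ≤ a₂ + i) = range (a₁+1) by
      ext i; simp only [mem_filter, mem_range]; omega]
    push_cast
    have hcong : ∑ x ∈ range (a₁+1), (p:ℚ) ^ ((a₂ - (b - x)) ⊓ x)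
        = ∑ x ∈ range (a₁+1), (p:ℚ)^x :=
      Finset.sum_congr rfl (fun i hi => by rw [mem_range] at hi; congr 1; omega)
    rw [hcong, geom_sum_eq hp1]
  · intro h2b
    rw [key]
    rw [show (range (a₁+1)).filter (fun i => i ≤ b ∧ b ≤ a₂ + i) = Ico (b - a₂) (a₁+1) by
      ext i; simp only [mem_filter, mem_range, mem_Ico]; omega]
    rw [Finset.sum_Ico_eq_sum_range]
    rw [show a₁ + 1 - (b - a₂) = (a₁ + a₂ - b) + 1 from by omega]
    push_cast
    have hcong : ∑ x ∈ range (a₁ + a₂ - b + 1), (p:ℚ) ^ ((a₂ - (b - (b - a₂ + x))) ⊓ (b - a₂ + x))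
        = ∑ x ∈ range (a₁ + a₂ - b + 1), (p:ℚ)^x :=
      Finset.sum_congr rfl (fun i hi => by rw [mem_range] at hi; congr 1; omega)
    rw [hcong, geom_sum_eq hp1]
end
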